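/- arXiv:2203.16103 — 3 statements merged into one kernel-verified Lean document; each statement's English description precedes it below -/
import Mathlib

section
/- Let d ≥ 1 and let f and g be smooth self-covering maps of 𝕋^d (each with nonvanishing Jacobian determinant). Then for every μ ≥ 0 one has B^μ(f ∘ g) ≤ B^μ(f) · B^μ(g). In particular B^μ(f^{n+m}) ≤ B^μ(f^n) · B^μ(f^m) for all integers n, m ≥ 1, i.e. the sequence n ↦ B^μ(f^n) is submultiplicative. -/
open MeasureTheory Filter Topology Real
noncomputable section

/-- `ℝ^d` with the Euclidean norm. -/
abbrev Ed (d : ℕ) := EuclideanSpace ℝ (Fin d)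

/-- The integer vector `k ∈ ℤ^d` viewed inside `ℝ^d`. -/
def intVec (d : ℕ) (k : Fin d → ℤ) : Ed d := WithLp.toLp 2 (fun i => (k i : ℝ))

/-- `F : ℝ^d → ℝ^d` is a `C^∞` lift of a self-covering map of `𝕋^d = ℝ^d/ℤ^d`
with linear part the integer matrix `A`:  `F(x+k) = F(x) + A k`, `det A ≠ 0`,
and the Jacobian determinant of `F` vanishes nowhere. -/
def IsLift (d : ℕ) (A : Matrix (Fin d) (Fin d) ℤ) (F : Ed d → Ed d) : Prop :=
  ContDiff ℝ (⊤ : ℕ∞) F ∧ A.det ≠ 0 ∧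
    (∀ x k, F (x + intVec d k) = F x + intVec d (A.mulVec k)) ∧
    ∀ x, (fderiv ℝ F x).det ≠ 0

/-- `P` is a set of representatives, one from each `ℤ^d`-class `[p]` with `F(p) ∈ q + ℤ^d`. -/
def IsFiberRep (d : ℕ) (F : Ed d → Ed d) (q : Ed d) (P : Finset (Ed d)) : Prop :=
  (∀ p ∈ P, ∃ k, F p = q + intVec d k) ∧
    (∀ p ∈ P, ∀ p' ∈ P, (∃ k, p' = p + intVec d k) → p' = p) ∧
    ∀ p, (∃ k, F p = q + intVec d k) → ∃ p' ∈ P, ∃ k, p = p' + intVec d k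

/-- `b^μ((q,ξ); f) = Σ_{p ∈ P_q} (|ξ| / |(D_pF)^T ξ|)^μ / |det D_pF|`. -/
def bmu (d : ℕ) (μ : ℝ) (F : Ed d → Ed d) (ξ : Ed d) (P : Finset (Ed d)) : ℝ :=
  ∑ p ∈ P, (‖ξ‖ / ‖ContinuousLinearMap.adjoint (fderiv ℝ F p) ξ‖) ^ μ / |(fderiv ℝ F p).det|

/-- `B^μ(f) = sup { b^μ((q,ξ); f) : q ∈ ℝ^d, ξ ≠ 0 }`. -/
def Bmu (d : ℕ) (μ : ℝ) (F : Ed d → Ed d) : ℝ :=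
  sSup {b | ∃ q ξ P, ξ ≠ 0 ∧ IsFiberRep d F q P ∧ b = bmu d μ F ξ P}

/-- `inf_{n ≥ 1} (B^μ(f^n))^{1/n}`. -/
def VErate (d : ℕ) (μ : ℝ) (F : Ed d → Ed d) : ℝ :=
  ⨅ n : ℕ, Bmu d μ (F^[n + 1]) ^ ((1 : ℝ) / (n + 1))

/-- `f` is `μ`-virtually expanding: `inf_{n ≥ 1} (B^{2μ}(f^n))^{1/n} < 1`. -/
def VirtExpanding (d : ℕ) (μ : ℝ) (F : Ed d → Ed d) : Prop :=
  VErate d (2 * μ) F < 1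

/-- The torus `𝕋^d = ℝ^d/ℤ^d`. -/
abbrev Torus (d : ℕ) := Fin d → AddCircle (1 : ℝ)

/-- The projection `ℝ^d → 𝕋^d`. -/
def proj (d : ℕ) (x : Ed d) : Torus d := fun i => (x i : AddCircle (1 : ℝ))

/-- The Fourier coefficient `û(n) = ∫_{𝕋^d} u(x) e^{-2πi⟨n,x⟩} dx`. -/
def fcoef (d : ℕ) (u : Torus d → ℂ) (n : Fin d → ℤ) : ℂ :=
  ∫ x : Torus d, u x * ∏ i, fourier (-(n i)) (x i)

/-- The weight `(1+|n|²)^μ`. -/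
def wgt (d : ℕ) (μ : ℝ) (n : Fin d → ℤ) : ℝ :=
  (1 + ∑ i, ((n i : ℝ)) ^ 2) ^ μ

/-- The squared Sobolev norm `‖u‖²_{H^μ} = Σ_n (1+|n|²)^μ |û(n)|²`. -/
def sobNormSq (d : ℕ) (μ : ℝ) (u : Torus d → ℂ) : ℝ :=
  ∑' n : Fin d → ℤ, wgt d μ n * ‖fcoef d u n‖ ^ 2

/-- The Sobolev norm `‖u‖_{H^μ}`. -/
def sobNorm (d : ℕ) (μ : ℝ) (u : Torus d → ℂ) : ℝ :=
  Real.sqrt (sobNormSq d μ u)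

/-- `u` is a smooth function on the torus `𝕋^d`. -/
def SmoothOnTorus (d : ℕ) (u : Torus d → ℂ) : Prop :=
  ContDiff ℝ (⊤ : ℕ∞) fun x : Ed d => u (proj d x)

/-- `Pu` is the image of `u` under the Perron–Frobenius operator of the covering map with lift
`F`:  `(Pu)(q) = Σ_{p ∈ f⁻¹(q)} u(p)/|det D_pF|`. -/
def IsPF (d : ℕ) (F : Ed d → Ed d) (u Pu : Torus d → ℂ) : Prop :=
  ∀ q P, IsFiberRep d F q P →
    Pu (proj d q) = ∑ p ∈ P, u (proj d p) / (Complex.ofReal |(fderiv ℝ F p).det|)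

lemma coord_le_norm {d : ℕ} (x : Ed d) (i : Fin d) : |x i| ≤ ‖x‖ := by
  rw [EuclideanSpace.norm_eq, ← Real.sqrt_sq_eq_abs]
  apply Real.sqrt_le_sqrt
  calc (x i)^2 = ‖x i‖^2 := by rw [Real.norm_eq_abs, sq_abs]
    _ ≤ ∑ j, ‖x j‖^2 := Finset.single_le_sum (f := fun j => ‖x j‖^2)
        (fun j _ => by positivity) (Finset.mem_univ i)

lemma intVec_add (d : ℕ) (k l : Fin d → ℤ) : intVec d (k + l) = intVec d k + intVec d l := by
  ext i; simp [intVec]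

lemma intVec_eq_zero (d : ℕ) (k : Fin d → ℤ) (h : intVec d k = 0) : k = 0 := by
  funext i
  have := congrArg (fun v : Ed d => v i) h
  simpa [intVec] using this

lemma one_le_norm_intVec (d : ℕ) (k : Fin d → ℤ) (h : k ≠ 0) : (1:ℝ) ≤ ‖intVec d k‖ := by
  obtain ⟨i, hi⟩ : ∃ i, k i ≠ 0 := by
    by_contra hc; push_neg at hc; exact h (funext hc)
  have h1 : (1:ℝ) ≤ |(k i : ℝ)| := by
    rw [← Int.cast_abs]; exact_mod_cast Int.one_le_abs hi
  exact h1.trans (by simpa [intVec] using coord_le_norm (intVec d k) i)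

section Lift
variable {d : ℕ} {A A' : Matrix (Fin d) (Fin d) ℤ} {F G : Ed d → Ed d}

lemma IsLift.diff (hF : IsLift d A F) : Differentiable ℝ F := hF.1.differentiable (by simp)

lemma IsLift.fderiv_periodic (hF : IsLift d A F) (x : Ed d) (k : Fin d → ℤ) :
    fderiv ℝ F (x + intVec d k) = fderiv ℝ F x := by
  have hdiff := hF.diff
  have h1 : HasFDerivAt (fun y => F (y + intVec d k)) (fderiv ℝ F (x + intVec d k)) x := by
    have := ((hdiff (x + intVec d k)).hasFDerivAt).comp x
      ((hasFDerivAt_id x).add_const (intVec d k))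
    exact this
  have h2 : HasFDerivAt (fun y => F (y + intVec d k)) (fderiv ℝ F x) x := by
    have he : (fun y => F (y + intVec d k)) = fun y => F y + intVec d (A.mulVec k) :=
      funext fun y => hF.2.2.1 y k
    rw [he]
    exact ((hdiff x).hasFDerivAt).add_const _
  exact h1.unique h2

lemma IsLift.fderiv_comp (hF : IsLift d A F) (hG : IsLift d A' G) (x : Ed d) :
    fderiv ℝ (F ∘ G) x = (fderiv ℝ F (G x)).comp (fderiv ℝ G x) :=
  _root_.fderiv_comp x (hF.diff (G x)) (hG.diff x)

lemma IsLift.comp (hF : IsLift d A F) (hG : IsLift d A' G) : IsLift d (A * A') (F ∘ G) := by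
  refine ⟨hF.1.comp hG.1, by simp [Matrix.det_mul, hF.2.1, hG.2.1], ?_, ?_⟩
  · intro x k
    simp only [Function.comp_apply, hG.2.2.1 x k, hF.2.2.1 (G x) (A'.mulVec k),
      Matrix.mulVec_mulVec]
  · intro x
    rw [hF.fderiv_comp hG x]
    have : ((fderiv ℝ F (G x)).comp (fderiv ℝ G x)).det
        = (fderiv ℝ F (G x)).det * (fderiv ℝ G x).det := by
      simp [ContinuousLinearMap.det, ContinuousLinearMap.coe_comp, LinearMap.det_comp]
    rw [this]
    exact mul_ne_zero (hF.2.2.2 (G x)) (hG.2.2.2 x)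

lemma isLift_id : IsLift d 1 id := by
  refine ⟨contDiff_id, by simp, ?_, ?_⟩
  · intro x k; simp [Matrix.one_mulVec]
  · intro x; rw [fderiv_id]; simp [ContinuousLinearMap.det]

lemma IsLift.iterate (hF : IsLift d A F) (n : ℕ) : IsLift d (A ^ n) F^[n] := by
  induction n with
  | zero => simpa using isLift_id
  | succ n ih =>
      rw [Function.iterate_succ', pow_succ']
      exact hF.comp ih

def fracPart {d : ℕ} (x : Ed d) : Ed d := WithLp.toLp 2 (fun i => Int.fract (x i))
def flr {d : ℕ} (x : Ed d) : Fin d → ℤ := fun i => ⌊x i⌋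

lemma fracPart_add_floor {d : ℕ} (x : Ed d) : fracPart x + intVec d (flr x) = x := by
  ext i
  simpa [fracPart, flr, intVec] using Int.fract_add_floor (x i)

def cubeK (d : ℕ) : Set (Ed d) := Metric.closedBall 0 d

lemma cubeK_compact (d : ℕ) : IsCompact (cubeK d) := isCompact_closedBall _ _

lemma mem_cubeK_of_Ico {d : ℕ} (x : Ed d) (h : ∀ i, x i ∈ Set.Ico (0:ℝ) 1) : x ∈ cubeK d := by
  simp only [cubeK, Metric.mem_closedBall, dist_zero_right]
  rw [EuclideanSpace.norm_eq]
  have h1 : ∑ i, ‖x i‖ ^ 2 ≤ (d : ℝ) := by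
    calc ∑ i, ‖x i‖ ^ 2 ≤ ∑ _i : Fin d, (1:ℝ) := by
          refine Finset.sum_le_sum fun i _ => ?_
          have := (h i).1; have := (h i).2
          rw [Real.norm_eq_abs, abs_of_nonneg (h i).1]
          nlinarith
      _ = d := by simp
  calc Real.sqrt (∑ i, ‖x i‖ ^ 2) ≤ Real.sqrt ((d:ℝ)^2) :=
        Real.sqrt_le_sqrt (by
          rcases Nat.eq_zero_or_pos d with h0 | h0
          · simpa [h0] using h1
          · have : (1:ℝ) ≤ d := by exact_mod_cast h0
            nlinarith)
    _ = d := by rw [Real.sqrt_sq (Nat.cast_nonneg d)]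

lemma fracPart_mem_cubeK {d : ℕ} (x : Ed d) : fracPart x ∈ cubeK d :=
  mem_cubeK_of_Ico _ fun i => ⟨Int.fract_nonneg (x i), Int.fract_lt_one (x i)⟩

section Lift2
variable {d : ℕ} {A : Matrix (Fin d) (Fin d) ℤ} {F : Ed d → Ed d}

lemma IsLift.local_inj (hF : IsLift d A F) (z : Ed d) :
    ∃ U : Set (Ed d), IsOpen U ∧ z ∈ U ∧ Set.InjOn F U := by
  have hs : HasStrictFDerivAt F (fderiv ℝ F z) z :=
    (hF.1.contDiffAt).hasStrictFDerivAt (by simp)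
  set L := fderiv ℝ F z with hL
  have hdet : LinearMap.det (L : Ed d →ₗ[ℝ] Ed d) ≠ 0 := hF.2.2.2 z
  let e : Ed d ≃ₗ[ℝ] Ed d := LinearMap.equivOfDetNeZero _ hdet
  let e' : Ed d ≃L[ℝ] Ed d := e.toContinuousLinearEquiv
  have hcoe : (e' : Ed d →L[ℝ] Ed d) = L := by ext x; rfl
  have hs' : HasStrictFDerivAt F (e' : Ed d →L[ℝ] Ed d) z := by rw [hcoe]; exact hs
  refine ⟨(HasStrictFDerivAt.toOpenPartialHomeomorph F hs').source, (HasStrictFDerivAt.toOpenPartialHomeomorph F hs').open_source,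
    HasStrictFDerivAt.mem_toOpenPartialHomeomorph_source hs', ?_⟩
  have := (HasStrictFDerivAt.toOpenPartialHomeomorph F hs').injOn
  rwa [HasStrictFDerivAt.toOpenPartialHomeomorph_coe] at this

lemma IsLift.unif_inj (hF : IsLift d A F) :
    ∃ δ > 0, ∀ x ∈ cubeK d, ∀ y ∈ cubeK d, dist x y < δ →
      (∃ k, F x - F y = intVec d k) → x = y := by
  classical
  have hK := cubeK_compact d
  have hUC : UniformContinuousOn F (cubeK d) :=
    hK.uniformContinuousOn_of_continuous (hF.1.continuous.continuousOn)
  obtain ⟨δ1, hδ1, h1⟩ := (Metric.uniformContinuousOn_iff.mp hUC) 1 one_pos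
  choose U hUo hUm hUinj using fun z : Ed d => hF.local_inj z
  obtain ⟨δ2, hδ2, h2⟩ := lebesgue_number_lemma_of_metric hK hUo
    (fun x _ => Set.mem_iUnion.mpr ⟨x, hUm x⟩)
  refine ⟨min δ1 δ2, lt_min hδ1 hδ2, fun x hx y hy hdist ⟨k, hk⟩ => ?_⟩
  have hFeq : F x = F y := by
    have hlt : dist (F x) (F y) < 1 := h1 x hx y hy (hdist.trans_le (min_le_left _ _))
    have : k = 0 := by
      by_contra hk0
      have := one_le_norm_intVec d k hk0
      rw [← hk, ← dist_eq_norm] at this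
      linarith
    rw [this] at hk
    have hz : intVec d (0 : Fin d → ℤ) = 0 := by ext i; simp [intVec]
    rw [hz] at hk
    exact sub_eq_zero.mp hk
  obtain ⟨z, hz⟩ := h2 x hx
  exact hUinj z (hz (Metric.mem_ball_self (lt_of_lt_of_le (lt_min hδ1 hδ2) (min_le_right _ _))))
    (hz (by rw [Metric.mem_ball, dist_comm]; exact hdist.trans_le (min_le_right _ _))) hFeq

end Lift2

lemma intVec_sub (d : ℕ) (k l : Fin d → ℤ) : intVec d (k - l) = intVec d k - intVec d l := by
  ext i; simp [intVec]

section Lift3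
variable {d : ℕ} {A : Matrix (Fin d) (Fin d) ℤ} {F : Ed d → Ed d}

lemma IsLift.F_fracPart (hF : IsLift d A F) (p : Ed d) :
    F (fracPart p) = F p - intVec d (A.mulVec (flr p)) := by
  have h := hF.2.2.1 (fracPart p) (flr p)
  rw [fracPart_add_floor] at h
  rw [h]; abel

lemma fracPart_inj_of_rep {q : Ed d} {P : Finset (Ed d)} (hP : IsFiberRep d F q P)
    {p p' : Ed d} (hp : p ∈ P) (hp' : p' ∈ P) (h : fracPart p = fracPart p') : p' = p := by
  refine hP.2.1 p hp p' hp' ⟨flr p' - flr p, ?_⟩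
  calc p' = fracPart p' + intVec d (flr p') := (fracPart_add_floor p').symm
    _ = fracPart p + intVec d (flr p) + (intVec d (flr p') - intVec d (flr p)) := by
        rw [h]; abel
    _ = p + intVec d (flr p' - flr p) := by rw [fracPart_add_floor, intVec_sub]

lemma IsLift.card_bound (hF : IsLift d A F) :
    ∃ N : ℕ, ∀ (q : Ed d) (P : Finset (Ed d)), IsFiberRep d F q P → P.card ≤ N := by
  classical
  obtain ⟨δ, hδ, hsep⟩ := hF.unif_inj
  obtain ⟨t, ht⟩ := (cubeK_compact d).elim_finite_subcover
    (fun z : Ed d => Metric.ball z (δ / 2)) (fun z => Metric.isOpen_ball)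
    (fun x hx => Set.mem_iUnion.mpr ⟨x, Metric.mem_ball_self (by linarith)⟩)
  refine ⟨t.card, fun q P hP => ?_⟩
  have hex : ∀ p : Ed d, p ∈ P → ∃ z ∈ t, fracPart p ∈ Metric.ball z (δ / 2) := by
    intro p _
    have := ht (fracPart_mem_cubeK p)
    simpa using this
  set f : Ed d → Ed d := fun p =>
    if h : ∃ z ∈ t, fracPart p ∈ Metric.ball z (δ / 2) then h.choose else 0 with hf
  apply Finset.card_le_card_of_injOn f
  · intro p hp
    have h := hex p hp
    simp only [hf, dif_pos h]
    exact h.choose_spec.1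
  · intro p hp p' hp' hff
    have h := hex p hp
    have h' := hex p' hp'
    have hb : fracPart p ∈ Metric.ball h.choose (δ / 2) := h.choose_spec.2
    have hb' : fracPart p' ∈ Metric.ball h'.choose (δ / 2) := h'.choose_spec.2
    have hcc : h.choose = h'.choose := by
      rw [hf] at hff
      simp only [dif_pos h, dif_pos h'] at hff
      exact hff
    have hdist : dist (fracPart p) (fracPart p') < δ := by
      rw [hcc] at hb
      calc dist (fracPart p) (fracPart p') ≤
          dist (fracPart p) h'.choose + dist (fracPart p') h'.choose := dist_triangle_right _ _ _
        _ < δ / 2 + δ / 2 := add_lt_add hb hb'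
        _ = δ := by ring
    obtain ⟨k, hk⟩ := hP.1 p hp
    obtain ⟨k', hk'⟩ := hP.1 p' hp'
    have hlat : F (fracPart p) - F (fracPart p') =
        intVec d (k - A.mulVec (flr p) - (k' - A.mulVec (flr p'))) := by
      rw [hF.F_fracPart p, hF.F_fracPart p', hk, hk', intVec_sub, intVec_sub, intVec_sub]
      abel
    have := hsep _ (fracPart_mem_cubeK p) _ (fracPart_mem_cubeK p') hdist ⟨_, hlat⟩
    exact (fracPart_inj_of_rep hP hp' hp this.symm)

end Lift3

section Lift4
variable {d : ℕ} {A : Matrix (Fin d) (Fin d) ℤ} {F : Ed d → Ed d}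

lemma adjoint_ne_zero (M : Ed d →L[ℝ] Ed d) (hdet : M.det ≠ 0) {ξ : Ed d} (hξ : ξ ≠ 0) :
    ContinuousLinearMap.adjoint M ξ ≠ 0 := by
  intro h0
  apply hξ
  have hsurj : Function.Surjective M := by
    have := (LinearMap.equivOfDetNeZero (M : Ed d →ₗ[ℝ] Ed d) hdet).surjective
    exact this
  obtain ⟨y, hy⟩ := hsurj ξ
  have : (inner ℝ ξ ξ : ℝ) = 0 := by
    calc (inner ℝ ξ ξ : ℝ) = inner ℝ ξ (M y) := by rw [hy]
      _ = inner ℝ (ContinuousLinearMap.adjoint M ξ) y := (ContinuousLinearMap.adjoint_inner_left M y ξ).symm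
      _ = 0 := by rw [h0]; simp
  exact inner_self_eq_zero.mp this

lemma IsLift.fderiv_fracPart (hF : IsLift d A F) (p : Ed d) :
    fderiv ℝ F p = fderiv ℝ F (fracPart p) := by
  conv_lhs => rw [← fracPart_add_floor p]
  exact hF.fderiv_periodic (fracPart p) (flr p)

lemma IsLift.term_bound (hF : IsLift d A F) (hd : 1 ≤ d) {μ : ℝ} (hμ : 0 ≤ μ) :
    ∃ C : ℝ, 0 ≤ C ∧ ∀ (p ξ : Ed d), ξ ≠ 0 →
      (‖ξ‖ / ‖ContinuousLinearMap.adjoint (fderiv ℝ F p) ξ‖) ^ μ / |(fderiv ℝ F p).det| ≤ C := by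
  have hfd : Continuous (fderiv ℝ F) := hF.1.continuous_fderiv (by simp)
  have hadj : Continuous fun x : Ed d => ContinuousLinearMap.adjoint (fderiv ℝ F x) :=
    (ContinuousLinearMap.adjoint (𝕜 := ℝ) (E := Ed d) (F := Ed d)).continuous.comp hfd
  have hg : Continuous fun pr : Ed d × Ed d =>
      ‖ContinuousLinearMap.adjoint (fderiv ℝ F pr.1) pr.2‖ :=
    ((hadj.comp continuous_fst).clm_apply continuous_snd).norm
  have h0K : (0 : Ed d) ∈ cubeK d := Metric.mem_closedBall_self (Nat.cast_nonneg d)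
  have hSne : ((cubeK d) ×ˢ (Metric.sphere (0 : Ed d) 1)).Nonempty := by
    refine ⟨(0, EuclideanSpace.single (⟨0, hd⟩ : Fin d) (1 : ℝ)), h0K, ?_⟩
    simp [EuclideanSpace.norm_single]
  obtain ⟨⟨x₀, ξ₀⟩, hmem, hmin⟩ := ((cubeK_compact d).prod (isCompact_sphere (0 : Ed d) 1)).exists_isMinOn
    hSne hg.continuousOn
  set m1 := ‖ContinuousLinearMap.adjoint (fderiv ℝ F x₀) ξ₀‖ with hm1def
  have hξ₀ : ξ₀ ≠ 0 := by
    have : ‖ξ₀‖ = 1 := by simpa using hmem.2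
    intro h; rw [h] at this; simp at this
  have hm1 : 0 < m1 :=
    norm_pos_iff.mpr (adjoint_ne_zero _ (hF.2.2.2 x₀) hξ₀)
  have hdetc : Continuous fun x : Ed d => |(fderiv ℝ F x).det| :=
    (ContinuousLinearMap.continuous_det.comp hfd).abs
  obtain ⟨x₁, hx₁, hmin2⟩ := (cubeK_compact d).exists_isMinOn ⟨0, h0K⟩ hdetc.continuousOn
  set m2 := |(fderiv ℝ F x₁).det| with hm2def
  have hm2 : 0 < m2 := abs_pos.mpr (hF.2.2.2 x₁)
  refine ⟨(1 / m1) ^ μ / m2, by positivity, fun p ξ hξ => ?_⟩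
  rw [hF.fderiv_fracPart p]
  set M := fderiv ℝ F (fracPart p) with hM
  have hξn : ‖ξ‖ ≠ 0 := norm_ne_zero_iff.mpr hξ
  set u : Ed d := ‖ξ‖⁻¹ • ξ with hu
  have hun : ‖u‖ = 1 := norm_smul_inv_norm hξ
  have hadju : m1 ≤ ‖ContinuousLinearMap.adjoint M u‖ := by
    refine hmin (a := (fracPart p, u)) ⟨fracPart_mem_cubeK p, ?_⟩
    simp [hun]
  have hau : (0:ℝ) < ‖ContinuousLinearMap.adjoint M u‖ := lt_of_lt_of_le hm1 hadju
  have hnorm : ‖ContinuousLinearMap.adjoint M ξ‖ = ‖ξ‖ * ‖ContinuousLinearMap.adjoint M u‖ := by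
    have hξu : ξ = ‖ξ‖ • u := by
      rw [hu, smul_smul, mul_inv_cancel₀ hξn, one_smul]
    conv_lhs => rw [hξu]
    rw [_root_.map_smul, norm_smul, Real.norm_eq_abs, abs_of_nonneg (norm_nonneg ξ)]
  have hratio : ‖ξ‖ / ‖ContinuousLinearMap.adjoint M ξ‖ ≤ 1 / m1 := by
    rw [hnorm]
    have h2 : ‖ξ‖ / (‖ξ‖ * ‖ContinuousLinearMap.adjoint M u‖)
        = 1 / ‖ContinuousLinearMap.adjoint M u‖ := by
      field_simp
    rw [h2]
    exact one_div_le_one_div_of_le hm1 hadju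
  have hrpow : (‖ξ‖ / ‖ContinuousLinearMap.adjoint M ξ‖) ^ μ ≤ (1 / m1) ^ μ :=
    Real.rpow_le_rpow (by positivity) hratio hμ
  exact div_le_div₀ (by positivity) hrpow hm2 (hmin2 (fracPart_mem_cubeK p))
end Lift4

section Lift5
variable {d : ℕ} {A : Matrix (Fin d) (Fin d) ℤ} {F : Ed d → Ed d}

lemma bmu_nonneg (d : ℕ) (μ : ℝ) (F : Ed d → Ed d) (ξ : Ed d) (P : Finset (Ed d)) :
    0 ≤ bmu d μ F ξ P :=
  Finset.sum_nonneg fun p _ => by positivity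

lemma Bmu_nonneg (d : ℕ) (μ : ℝ) (F : Ed d → Ed d) : 0 ≤ Bmu d μ F :=
  Real.sSup_nonneg fun b hb => by
    obtain ⟨q, ξ, P, _, _, rfl⟩ := hb
    exact bmu_nonneg d μ F ξ P

lemma IsLift.bddAbove_bmuSet (hF : IsLift d A F) (hd : 1 ≤ d) {μ : ℝ} (hμ : 0 ≤ μ) :
    BddAbove {b | ∃ q ξ P, ξ ≠ 0 ∧ IsFiberRep d F q P ∧ b = bmu d μ F ξ P} := by
  obtain ⟨N, hN⟩ := hF.card_bound
  obtain ⟨C, hC0, hC⟩ := hF.term_bound hd hμ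
  refine ⟨N * C, fun b hb => ?_⟩
  obtain ⟨q, ξ, P, hξ, hP, rfl⟩ := hb
  calc bmu d μ F ξ P ≤ P.card • C :=
        Finset.sum_le_card_nsmul P _ C (fun p _ => hC p ξ hξ)
    _ = (P.card : ℝ) * C := nsmul_eq_mul _ _
    _ ≤ N * C := by
        have h := hN q P hP
        have h2 : (P.card : ℝ) ≤ N := by exact_mod_cast h
        exact mul_le_mul_of_nonneg_right h2 hC0

lemma IsLift.le_Bmu (hF : IsLift d A F) (hd : 1 ≤ d) {μ : ℝ} (hμ : 0 ≤ μ)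
    {q ξ : Ed d} {P : Finset (Ed d)} (hξ : ξ ≠ 0) (hP : IsFiberRep d F q P) :
    bmu d μ F ξ P ≤ Bmu d μ F :=
  le_csSup (hF.bddAbove_bmuSet hd hμ) ⟨q, ξ, P, hξ, hP, rfl⟩

def canonSet (d : ℕ) (F : Ed d → Ed d) (q : Ed d) : Set (Ed d) :=
  {p | (∀ i, p i ∈ Set.Ico (0:ℝ) 1) ∧ ∃ k, F p = q + intVec d k}

lemma IsLift.canonSet_finite (hF : IsLift d A F) (q : Ed d) : (canonSet d F q).Finite := by
  classical
  obtain ⟨δ, hδ, hsep⟩ := hF.unif_inj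
  obtain ⟨t, ht⟩ := (cubeK_compact d).elim_finite_subcover
    (fun z : Ed d => Metric.ball z (δ / 2)) (fun z => Metric.isOpen_ball)
    (fun x hx => Set.mem_iUnion.mpr ⟨x, Metric.mem_ball_self (by linarith)⟩)
  have hmemK : ∀ p ∈ canonSet d F q, p ∈ cubeK d := fun p hp => mem_cubeK_of_Ico p hp.1
  have hex : ∀ p ∈ canonSet d F q, ∃ z ∈ t, p ∈ Metric.ball z (δ / 2) := by
    intro p hp
    have := ht (hmemK p hp)
    simpa using this
  set f : Ed d → Ed d := fun p =>
    if h : ∃ z ∈ t, p ∈ Metric.ball z (δ / 2) then h.choose else 0 with hf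
  have hginj : Set.InjOn f (canonSet d F q) := by
    intro p hp p' hp' hff
    have h := hex p hp
    have h' := hex p' hp'
    have hb : p ∈ Metric.ball h.choose (δ / 2) := h.choose_spec.2
    have hb' : p' ∈ Metric.ball h'.choose (δ / 2) := h'.choose_spec.2
    have hcc : h.choose = h'.choose := by
      rw [hf] at hff
      simp only [dif_pos h, dif_pos h'] at hff
      exact hff
    have hdist : dist p p' < δ := by
      rw [hcc] at hb
      calc dist p p' ≤ dist p h'.choose + dist p' h'.choose := dist_triangle_right _ _ _
        _ < δ / 2 + δ / 2 := add_lt_add hb hb'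
        _ = δ := by ring
    obtain ⟨k, hk⟩ := hp.2
    obtain ⟨k', hk'⟩ := hp'.2
    have hlat : F p - F p' = intVec d (k - k') := by
      rw [hk, hk', intVec_sub]; abel
    exact hsep p (hmemK p hp) p' (hmemK p' hp') hdist ⟨_, hlat⟩
  have hmapsto : Set.MapsTo f (canonSet d F q) (t : Set (Ed d)) := by
    intro p hp
    have h := hex p hp
    simp only [hf, dif_pos h]
    exact h.choose_spec.1
  exact Set.Finite.of_finite_image ((t.finite_toSet).subset (Set.image_subset_iff.mpr hmapsto)) hginj

def IsLift.canonRep (hF : IsLift d A F) (q : Ed d) : Finset (Ed d) :=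
  (hF.canonSet_finite q).toFinset

lemma IsLift.mem_canonRep (hF : IsLift d A F) {q p : Ed d} :
    p ∈ hF.canonRep q ↔ (∀ i, p i ∈ Set.Ico (0:ℝ) 1) ∧ ∃ k, F p = q + intVec d k := by
  simp [IsLift.canonRep, Set.Finite.mem_toFinset, canonSet]

lemma IsLift.canonRep_isFiberRep (hF : IsLift d A F) (q : Ed d) :
    IsFiberRep d F q (hF.canonRep q) := by
  refine ⟨fun p hp => (hF.mem_canonRep.mp hp).2, ?_, ?_⟩
  · intro p hp p' hp' ⟨k, hk⟩
    have hI := (hF.mem_canonRep.mp hp).1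
    have hI' := (hF.mem_canonRep.mp hp').1
    have hk0 : k = 0 := by
      funext i
      have hcoord : p' i = p i + (k i : ℝ) := by rw [hk]; simp [intVec]
      have h1 := hI i
      have h2 := hI' i
      have : |(k i : ℝ)| < 1 := by
        rw [abs_lt]
        constructor <;> [nlinarith [h1.1, h1.2, h2.1, h2.2]; nlinarith [h1.1, h1.2, h2.1, h2.2]]
      have habs : |k i| < 1 := by
        exact_mod_cast (by rwa [← Int.cast_abs] at this : ((|k i| : ℤ) : ℝ) < 1)
      exact Int.abs_lt_one_iff.mp habs
    rw [hk, hk0]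
    ext i; simp [intVec]
  · intro p ⟨k, hk⟩
    refine ⟨fracPart p, ?_, flr p, (fracPart_add_floor p).symm⟩
    rw [hF.mem_canonRep]
    refine ⟨fun i => ⟨Int.fract_nonneg (p i), Int.fract_lt_one (p i)⟩, k - A.mulVec (flr p), ?_⟩
    rw [hF.F_fracPart p, hk, intVec_sub]
    abel

lemma IsLift.bmu_rep_invariant (hF : IsLift d A F) (μ : ℝ) {q : Ed d} (ξ : Ed d)
    {P P' : Finset (Ed d)} (hP : IsFiberRep d F q P) (hP' : IsFiberRep d F q P') :
    bmu d μ F ξ P = bmu d μ F ξ P' := by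
  classical
  set φ : Ed d → Ed d := fun p =>
    if h : ∃ p' ∈ P', ∃ k, p = p' + intVec d k then h.choose else 0 with hφdef
  set ψ : Ed d → Ed d := fun p =>
    if h : ∃ p' ∈ P, ∃ k, p = p' + intVec d k then h.choose else 0 with hψdef
  have hφex : ∀ p ∈ P, ∃ p' ∈ P', ∃ k, p = p' + intVec d k :=
    fun p hp => hP'.2.2 p (hP.1 p hp)
  have hψex : ∀ p ∈ P', ∃ p' ∈ P, ∃ k, p = p' + intVec d k :=
    fun p hp => hP.2.2 p (hP'.1 p hp)
  have hφmem : ∀ p ∈ P, φ p ∈ P' ∧ ∃ k, p = φ p + intVec d k := by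
    intro p hp
    have h := hφex p hp
    simp only [hφdef, dif_pos h]
    exact ⟨h.choose_spec.1, h.choose_spec.2⟩
  have hψmem : ∀ p ∈ P', ψ p ∈ P ∧ ∃ k, p = ψ p + intVec d k := by
    intro p hp
    have h := hψex p hp
    simp only [hψdef, dif_pos h]
    exact ⟨h.choose_spec.1, h.choose_spec.2⟩
  have key : ∀ (Q Q' : Finset (Ed d)), IsFiberRep d F q Q → IsFiberRep d F q Q' →
      ∀ (α β : Ed d → Ed d), (∀ p ∈ Q, α p ∈ Q' ∧ ∃ k, p = α p + intVec d k) →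
      (∀ p ∈ Q', β p ∈ Q ∧ ∃ k, p = β p + intVec d k) →
      ∀ p ∈ Q, β (α p) = p := by
    intro Q Q' hQ hQ' α β hα hβ p hp
    obtain ⟨hαm, k1, hk1⟩ := hα p hp
    obtain ⟨hβm, k2, hk2⟩ := hβ (α p) hαm
    have : p = β (α p) + intVec d (k2 + k1) := by
      rw [intVec_add, ← add_assoc, ← hk2, ← hk1]
    exact (hQ.2.1 (β (α p)) hβm p hp ⟨_, this⟩).symm
  refine Finset.sum_nbij' φ ψ (fun p hp => (hφmem p hp).1) (fun p hp => (hψmem p hp).1)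
    (key P P' hP hP' φ ψ hφmem hψmem) (key P' P hP' hP ψ φ hψmem hφmem) ?_
  intro p hp
  obtain ⟨hm, k, hk⟩ := hφmem p hp
  have heq : fderiv ℝ F p = fderiv ℝ F (φ p) := by
    conv_lhs => rw [hk]
    exact hF.fderiv_periodic (φ p) k
  rw [heq]

end Lift5

section Main
variable {d : ℕ} {A A' : Matrix (Fin d) (Fin d) ℤ} {F G : Ed d → Ed d}

lemma ico_translate_eq {p p' : Ed d} (h : ∀ i, p i ∈ Set.Ico (0:ℝ) 1)
    (h' : ∀ i, p' i ∈ Set.Ico (0:ℝ) 1) (hk : ∃ k, p' = p + intVec d k) : p' = p := by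
  obtain ⟨k, hkk⟩ := hk
  have hk0 : k = 0 := by
    funext i
    have hcoord : p' i = p i + (k i : ℝ) := by rw [hkk]; simp [intVec]
    have h1 := h i
    have h2 := h' i
    have habsr : |(k i : ℝ)| < 1 := by
      rw [abs_lt]
      constructor <;> [nlinarith [h1.1, h1.2, h2.1, h2.2]; nlinarith [h1.1, h1.2, h2.1, h2.2]]
    have habs : |k i| < 1 := by
      exact_mod_cast (by rwa [← Int.cast_abs] at habsr : ((|k i| : ℤ) : ℝ) < 1)
    exact Int.abs_lt_one_iff.mp habs
  rw [hkk, hk0]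
  ext i; simp [intVec]

lemma det_clm_comp (M N : Ed d →L[ℝ] Ed d) : (M.comp N).det = M.det * N.det := by
  simp [ContinuousLinearMap.det, ContinuousLinearMap.coe_comp, LinearMap.det_comp]

lemma Bmu_comp_le (hd : 1 ≤ d) (hF : IsLift d A F) (hG : IsLift d A' G) {μ : ℝ} (hμ : 0 ≤ μ) :
    Bmu d μ (F ∘ G) ≤ Bmu d μ F * Bmu d μ G := by
  classical
  have hFG := hF.comp hG
  apply Real.sSup_le _ (mul_nonneg (Bmu_nonneg d μ F) (Bmu_nonneg d μ G))
  rintro b ⟨q, ξ, Q, hξ, hQ, rfl⟩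
  set PF := hF.canonRep q with hPFdef
  have hPF := hF.canonRep_isFiberRep q
  set Q' := PF.biUnion (fun p => hG.canonRep p) with hQ'def
  have hmemQ' : ∀ r p, p ∈ PF → r ∈ hG.canonRep p →
      (∀ i, r i ∈ Set.Ico (0:ℝ) 1) ∧ ∃ k, (F ∘ G) r = q + intVec d k := by
    intro r p hpPF hr
    obtain ⟨hico, k, hk⟩ := hG.mem_canonRep.mp hr
    obtain ⟨_, k', hk'⟩ := hF.mem_canonRep.mp hpPF
    refine ⟨hico, k' + A.mulVec k, ?_⟩
    show F (G r) = q + intVec d (k' + A.mulVec k)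
    rw [hk, hF.2.2.1 p k, hk', intVec_add]
    abel
  have hQ' : IsFiberRep d (F ∘ G) q Q' := by
    refine ⟨?_, ?_, ?_⟩
    · intro r hr
      obtain ⟨p, hp, hrp⟩ := Finset.mem_biUnion.mp hr
      exact (hmemQ' r p hp hrp).2
    · intro r hr r' hr' hkk
      obtain ⟨p, hp, hrp⟩ := Finset.mem_biUnion.mp hr
      obtain ⟨p', hp', hrp'⟩ := Finset.mem_biUnion.mp hr'
      exact ico_translate_eq (hmemQ' r p hp hrp).1 (hmemQ' r' p' hp' hrp').1 hkk
    · intro r ⟨k, hk⟩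
      set p₀ := fracPart (G r) with hp₀
      have hp₀PF : p₀ ∈ PF := by
        rw [hPFdef, hF.mem_canonRep]
        refine ⟨fun i => ⟨Int.fract_nonneg (G r i), Int.fract_lt_one (G r i)⟩,
          k - A.mulVec (flr (G r)), ?_⟩
        rw [hp₀, hF.F_fracPart (G r), intVec_sub]
        have : F (G r) = q + intVec d k := hk
        rw [this]; abel
      have hrmem : fracPart r ∈ hG.canonRep p₀ := by
        rw [hG.mem_canonRep]
        refine ⟨fun i => ⟨Int.fract_nonneg (r i), Int.fract_lt_one (r i)⟩,
          flr (G r) - A'.mulVec (flr r), ?_⟩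
        rw [hG.F_fracPart r, intVec_sub, hp₀]
        conv_lhs => rw [← fracPart_add_floor (G r)]
        abel
      exact ⟨fracPart r, Finset.mem_biUnion.mpr ⟨p₀, hp₀PF, hrmem⟩, flr r,
        (fracPart_add_floor r).symm⟩
  rw [hFG.bmu_rep_invariant μ ξ hQ hQ']
  have hdisj : ∀ p ∈ PF, ∀ p' ∈ PF, p ≠ p' → Disjoint (hG.canonRep p) (hG.canonRep p') := by
    intro p hp p' hp' hne
    rw [Finset.disjoint_left]
    intro r hr hr'
    apply hne
    obtain ⟨hico, kk, hkk⟩ := hG.mem_canonRep.mp hr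
    obtain ⟨hico', kk', hkk'⟩ := hG.mem_canonRep.mp hr'
    have : p' = p + intVec d (kk - kk') := by
      rw [intVec_sub]
      have h1 : p + intVec d kk = p' + intVec d kk' := by rw [← hkk, ← hkk']
      have : p' = p + intVec d kk - intVec d kk' := by rw [h1]; abel
      rw [this]; abel
    exact (ico_translate_eq (hF.mem_canonRep.mp hp).1 (hF.mem_canonRep.mp hp').1
      ⟨_, this⟩).symm
  have hsum : bmu d μ (F ∘ G) ξ Q' = ∑ p ∈ PF, ∑ r ∈ hG.canonRep p,
      (‖ξ‖ / ‖ContinuousLinearMap.adjoint (fderiv ℝ (F ∘ G) r) ξ‖) ^ μ /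
        |(fderiv ℝ (F ∘ G) r).det| := by
    rw [hQ'def]
    exact Finset.sum_biUnion hdisj
  rw [hsum]
  have hterm : ∀ p ∈ PF, ∀ r ∈ hG.canonRep p,
      (‖ξ‖ / ‖ContinuousLinearMap.adjoint (fderiv ℝ (F ∘ G) r) ξ‖) ^ μ /
        |(fderiv ℝ (F ∘ G) r).det|
      = ((‖ξ‖ / ‖ContinuousLinearMap.adjoint (fderiv ℝ F p) ξ‖) ^ μ / |(fderiv ℝ F p).det|)
        * ((‖ContinuousLinearMap.adjoint (fderiv ℝ F p) ξ‖ /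
            ‖ContinuousLinearMap.adjoint (fderiv ℝ G r)
              (ContinuousLinearMap.adjoint (fderiv ℝ F p) ξ)‖) ^ μ / |(fderiv ℝ G r).det|) := by
    intro p hp r hr
    obtain ⟨_, kk, hkk⟩ := hG.mem_canonRep.mp hr
    have hfd : fderiv ℝ (F ∘ G) r = (fderiv ℝ F p).comp (fderiv ℝ G r) := by
      rw [hF.fderiv_comp hG r, hkk, hF.fderiv_periodic p kk]
    rw [hfd, det_clm_comp, ContinuousLinearMap.adjoint_comp, abs_mul]
    set a := ‖ξ‖
    set b := ‖ContinuousLinearMap.adjoint (fderiv ℝ F p) ξ‖ with hb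
    set c := ‖ContinuousLinearMap.adjoint (fderiv ℝ G r)
      (ContinuousLinearMap.adjoint (fderiv ℝ F p) ξ)‖ with hc
    have hbne : b ≠ 0 :=
      norm_ne_zero_iff.mpr (adjoint_ne_zero _ (hF.2.2.2 p) hξ)
    have hcomp : ‖(ContinuousLinearMap.adjoint (fderiv ℝ G r) ∘L
        ContinuousLinearMap.adjoint (fderiv ℝ F p)) ξ‖ = c := rfl
    rw [hcomp]
    have hac : a / c = (a / b) * (b / c) := by
      rw [div_mul_div_comm, mul_comm b c, mul_div_mul_right _ _ hbne]
    rw [hac, Real.mul_rpow (by positivity) (by positivity)]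
    rw [div_mul_div_comm]
  calc ∑ p ∈ PF, ∑ r ∈ hG.canonRep p,
        (‖ξ‖ / ‖ContinuousLinearMap.adjoint (fderiv ℝ (F ∘ G) r) ξ‖) ^ μ /
          |(fderiv ℝ (F ∘ G) r).det|
      = ∑ p ∈ PF, ((‖ξ‖ / ‖ContinuousLinearMap.adjoint (fderiv ℝ F p) ξ‖) ^ μ /
          |(fderiv ℝ F p).det|) * bmu d μ G (ContinuousLinearMap.adjoint (fderiv ℝ F p) ξ)
            (hG.canonRep p) := by
        refine Finset.sum_congr rfl fun p hp => ?_
        rw [bmu, Finset.mul_sum]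
        exact Finset.sum_congr rfl fun r hr => hterm p hp r hr
    _ ≤ ∑ p ∈ PF, ((‖ξ‖ / ‖ContinuousLinearMap.adjoint (fderiv ℝ F p) ξ‖) ^ μ /
          |(fderiv ℝ F p).det|) * Bmu d μ G := by
        refine Finset.sum_le_sum fun p hp => ?_
        refine mul_le_mul_of_nonneg_left ?_ (by positivity)
        exact hG.le_Bmu hd hμ (adjoint_ne_zero _ (hF.2.2.2 p) hξ) (hG.canonRep_isFiberRep p)
    _ = bmu d μ F ξ PF * Bmu d μ G := by rw [bmu, Finset.sum_mul]
    _ ≤ Bmu d μ F * Bmu d μ G :=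
        mul_le_mul_of_nonneg_right (hF.le_Bmu hd hμ hξ hPF) (Bmu_nonneg d μ G)

end Main

/-- For smooth self-covering maps `f, g` of `𝕋^d` and every `μ ≥ 0`,
`B^μ(f ∘ g) ≤ B^μ(f) · B^μ(g)`; in particular `n ↦ B^μ(f^n)` is submultiplicative. -/
theorem stmt5 (d : ℕ) (hd : 1 ≤ d)
    (A A' : Matrix (Fin d) (Fin d) ℤ) (F G : Ed d → Ed d)
    (hF : IsLift d A F) (hG : IsLift d A' G) (μ : ℝ) (hμ : 0 ≤ μ) :
    Bmu d μ (F ∘ G) ≤ Bmu d μ F * Bmu d μ G ∧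
      ∀ n m : ℕ, 1 ≤ n → 1 ≤ m →
        Bmu d μ (F^[n + m]) ≤ Bmu d μ (F^[n]) * Bmu d μ (F^[m]) := by
  constructor
  · exact Bmu_comp_le hd hF hG hμ
  · intro n m _ _
    have hiter : F^[n + m] = F^[n] ∘ F^[m] := Function.iterate_add F n m
    rw [hiter]
    exact Bmu_comp_le hd (hF.iterate n) (hF.iterate m) hμ
end Lift
end
end

section
/- Let d ≥ 1, μ > 0, and let f be a smooth self-covering map of 𝕋^d that is μ-virtually expanding. Then f is volume-expanding: liminf_{n→∞} ( inf_{p ∈ ℝ^d} |det D_pF^n| )^{1/n} > 1, where F^n is the n-fold composition of the lift F. -/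
open MeasureTheory Filter Topology Real
noncomputable section

section Stmt8AuxSection

namespace Stmt8Aux

variable {d : ℕ}

lemma intVec_apply (k : Fin d → ℤ) (i : Fin d) : intVec d k i = (k i : ℝ) := rfl

lemma intVec_zero : intVec d 0 = 0 := by
  ext i; simp [intVec]

lemma intVec_add (k l : Fin d → ℤ) : intVec d (k + l) = intVec d k + intVec d l := by
  ext i
  simp [intVec, PiLp.add_apply]

lemma intVec_sub (k l : Fin d → ℤ) : intVec d (k - l) = intVec d k - intVec d l := by
  ext i
  simp [intVec, PiLp.sub_apply]

variable {A : Matrix (Fin d) (Fin d) ℤ} {F : Ed d → Ed d}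

lemma lift_diff (hF : IsLift d A F) : Differentiable ℝ F :=
  hF.1.differentiable (by simp)

lemma det_fderiv_comp {F G : Ed d → Ed d} (hF : Differentiable ℝ F) (hG : Differentiable ℝ G)
    (x : Ed d) :
    (fderiv ℝ (F ∘ G) x).det = (fderiv ℝ F (G x)).det * (fderiv ℝ G x).det := by
  rw [fderiv_comp x (hF _) (hG _)]
  simp only [ContinuousLinearMap.det, ContinuousLinearMap.coe_comp, LinearMap.det_comp]
  exact LinearMap.det_comp _ _

lemma fderiv_shift {F : Ed d → Ed d} (hF : Differentiable ℝ F) (x v c : Ed d)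
    (h : ∀ y, F (y + v) = F y + c) : fderiv ℝ F (x + v) = fderiv ℝ F x := by
  have h1 : HasFDerivAt (fun y => F (y + v)) (fderiv ℝ F (x + v)) x := by
    have hc := (hF (x + v)).hasFDerivAt
    have ht : HasFDerivAt (fun y : Ed d => y + v) (ContinuousLinearMap.id ℝ (Ed d)) x :=
      (hasFDerivAt_id x).add_const v
    have hcomp := hc.comp x ht
    simp only [ContinuousLinearMap.comp_id] at hcomp
    exact hcomp
  have h2 : HasFDerivAt (fun y => F y + c) (fderiv ℝ F x) x :=
    ((hF x).hasFDerivAt).add_const c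
  have e : (fun y => F (y + v)) = fun y => F y + c := funext h
  rw [e] at h1
  exact h1.unique h2

lemma lift_fderiv_periodic (hF : IsLift d A F) (x : Ed d) (k : Fin d → ℤ) :
    fderiv ℝ F (x + intVec d k) = fderiv ℝ F x :=
  fderiv_shift (lift_diff hF) x _ _ (fun y => hF.2.2.1 y k)

lemma lift_iterate (hF : IsLift d A F) : ∀ m : ℕ, IsLift d (A ^ m) F^[m]
  | 0 => by
    refine ⟨by simpa using contDiff_id, by simp, fun x k => by simp [Matrix.one_mulVec], ?_⟩
    intro x
    rw [Function.iterate_zero, fderiv_id]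
    simp [ContinuousLinearMap.det]
  | (m + 1) => by
    obtain ⟨hsm, hdet, hper, hfd⟩ := lift_iterate hF m
    refine ⟨?_, ?_, ?_, ?_⟩
    · rw [Function.iterate_succ]
      exact hsm.comp hF.1
    · simp only [pow_succ, Matrix.det_mul]
      exact mul_ne_zero hdet hF.2.1
    · intro x k
      rw [Function.iterate_succ_apply, Function.iterate_succ_apply, hF.2.2.1, hper]
      congr 1
      rw [Matrix.mulVec_mulVec, ← pow_succ]
    · intro x
      rw [Function.iterate_succ]
      rw [det_fderiv_comp (hsm.differentiable (by simp)) (lift_diff hF)]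
      exact mul_ne_zero (hfd _) (hF.2.2.2 x)

/-- fractional part map -/
def fracMap (x : Ed d) : Ed d := x + intVec d fun i => -⌊x i⌋

lemma fracMap_mem (x : Ed d) (i : Fin d) : fracMap x i ∈ Set.Ico (0 : ℝ) 1 := by
  rw [fracMap, PiLp.add_apply, intVec_apply]
  push_cast
  constructor
  · linarith [Int.floor_le (x i)]
  · linarith [Int.lt_floor_add_one (x i)]

lemma fracMap_add_int (x : Ed d) : x = fracMap x + intVec d fun i => ⌊x i⌋ := by
  ext i
  rw [fracMap, PiLp.add_apply, PiLp.add_apply, intVec_apply, intVec_apply]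
  push_cast
  ring

def cube (d : ℕ) : Set (Ed d) := {x | ∀ i, x i ∈ Set.Icc (0 : ℝ) 1}

lemma fracMap_mem_cube (x : Ed d) : fracMap x ∈ cube d :=
  fun i => ⟨(fracMap_mem x i).1, (fracMap_mem x i).2.le⟩

lemma cube_nonempty : (cube d).Nonempty :=
  ⟨0, fun i => by simp⟩

lemma norm_le_sqrt_d {x : Ed d} (h : ∀ i, |x i| ≤ 1) : ‖x‖ ≤ Real.sqrt d := by
  rw [EuclideanSpace.norm_eq]
  apply Real.sqrt_le_sqrt
  calc ∑ i, ‖x i‖ ^ 2 ≤ ∑ _i : Fin d, 1 := by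
        refine Finset.sum_le_sum fun i _ => ?_
        rw [Real.norm_eq_abs, ← one_pow 2]
        exact pow_le_pow_left₀ (abs_nonneg _) (h i) 2
    _ = d := by simp

lemma isCompact_cube : IsCompact (cube d) := by
  have hclosed : IsClosed (cube d) := by
    have he : cube d = ⋂ i, (fun x : Ed d => x i) ⁻¹' Set.Icc 0 1 := by
      ext x; simp [cube]
    rw [he]
    exact isClosed_iInter fun i =>
      isClosed_Icc.preimage (EuclideanSpace.proj (𝕜 := ℝ) i).continuous
  have hsub : cube d ⊆ Metric.closedBall 0 (Real.sqrt d) := by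
    intro x hx
    rw [Metric.mem_closedBall, dist_zero_right]
    exact norm_le_sqrt_d fun i => abs_le.2 ⟨by linarith [(hx i).1], (hx i).2⟩
  exact (isCompact_closedBall 0 _).of_isClosed_subset hclosed hsub

lemma abs_coord_le_norm (x : Ed d) (i : Fin d) : |x i| ≤ ‖x‖ := by
  rw [EuclideanSpace.norm_eq, ← Real.sqrt_sq_eq_abs]
  apply Real.sqrt_le_sqrt
  calc x i ^ 2 = ‖x i‖ ^ 2 := by rw [Real.norm_eq_abs, sq_abs]
    _ ≤ ∑ j, ‖x j‖ ^ 2 :=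
        Finset.single_le_sum (fun j _ => sq_nonneg ‖x j‖) (Finset.mem_univ i)

end Stmt8Aux

namespace Stmt8Aux

variable {d : ℕ}

lemma det_adjoint (T : Ed d →L[ℝ] Ed d) :
    (ContinuousLinearMap.adjoint T).det = T.det := by
  classical
  set b := EuclideanSpace.basisFun (Fin d) ℝ with hb
  have h1 : ((ContinuousLinearMap.adjoint T : Ed d →L[ℝ] Ed d) : Ed d →ₗ[ℝ] Ed d)
      = LinearMap.adjoint (T : Ed d →ₗ[ℝ] Ed d) := rfl
  show LinearMap.det _ = LinearMap.det _
  rw [h1, ← LinearMap.det_toMatrix b.toBasis, LinearMap.toMatrix_adjoint,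
    Matrix.det_conjTranspose, ← LinearMap.det_toMatrix b.toBasis (T : Ed d →ₗ[ℝ] Ed d)]
  simp

variable {B : Matrix (Fin d) (Fin d) ℤ} {G : Ed d → Ed d}

lemma lift_det_bounds (hG : IsLift d B G) :
    ∃ γ D : ℝ, 0 < γ ∧ ∀ x, γ ≤ |(fderiv ℝ G x).det| ∧ |(fderiv ℝ G x).det| ≤ D := by
  have hcont : Continuous fun x : Ed d => |(fderiv ℝ G x).det| :=
    (ContinuousLinearMap.continuous_det.comp (hG.1.continuous_fderiv (by simp))).abs
  obtain ⟨a, ha, hmin⟩ := isCompact_cube.exists_isMinOn cube_nonempty hcont.continuousOn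
  obtain ⟨b, hb, hmax⟩ := isCompact_cube.exists_isMaxOn cube_nonempty hcont.continuousOn
  refine ⟨|(fderiv ℝ G a).det|, |(fderiv ℝ G b).det|, abs_pos.2 (hG.2.2.2 a), fun x => ?_⟩
  have hper : fderiv ℝ G x = fderiv ℝ G (fracMap x) := by
    conv_lhs => rw [fracMap_add_int x]
    exact lift_fderiv_periodic hG _ _
  rw [hper]
  exact ⟨isMinOn_iff.mp hmin _ (fracMap_mem_cube x), isMaxOn_iff.mp hmax _ (fracMap_mem_cube x)⟩

lemma lift_adjoint_lower (hd : 1 ≤ d) (hG : IsLift d B G) :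
    ∃ c : ℝ, 0 < c ∧ ∀ x (ξ : Ed d),
      c * ‖ξ‖ ≤ ‖ContinuousLinearMap.adjoint (fderiv ℝ G x) ξ‖ := by
  haveI : Nonempty (Fin d) := ⟨⟨0, hd⟩⟩
  haveI : Nontrivial (Ed d) := inferInstance
  have hK : IsCompact (cube d ×ˢ Metric.sphere (0 : Ed d) 1) :=
    isCompact_cube.prod (isCompact_sphere 0 1)
  have hKne : (cube d ×ˢ Metric.sphere (0 : Ed d) 1).Nonempty :=
    cube_nonempty.prod (NormedSpace.sphere_nonempty.mpr zero_le_one)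
  have hcont : Continuous fun p : Ed d × Ed d =>
      ‖ContinuousLinearMap.adjoint (fderiv ℝ G p.1) p.2‖ := by
    apply Continuous.norm
    have hfd : Continuous fun x : Ed d => ContinuousLinearMap.adjoint (fderiv ℝ G x) :=
      (ContinuousLinearMap.adjoint :
        (Ed d →L[ℝ] Ed d) ≃ₗᵢ⋆[ℝ] (Ed d →L[ℝ] Ed d)).continuous.comp
          (hG.1.continuous_fderiv (by simp))
    exact isBoundedBilinearMap_apply.continuous.comp
      ((hfd.comp continuous_fst).prodMk continuous_snd)
  obtain ⟨z, hz, hminz⟩ := hK.exists_isMinOn hKne hcont.continuousOn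
  obtain ⟨x₀, ξ₀⟩ := z
  set c := ‖ContinuousLinearMap.adjoint (fderiv ℝ G x₀) ξ₀‖ with hc
  have hξ₀ : ‖ξ₀‖ = 1 := by
    have := hz.2
    simpa [Metric.mem_sphere, dist_zero_right] using this
  have hcpos : 0 < c := by
    rw [hc, norm_pos_iff]
    intro h0
    have hdet : (ContinuousLinearMap.adjoint (fderiv ℝ G x₀)).det ≠ 0 := by
      rw [det_adjoint]; exact hG.2.2.2 x₀
    have hinj := (LinearMap.equivOfDetNeZero
      ((ContinuousLinearMap.adjoint (fderiv ℝ G x₀) : Ed d →L[ℝ] Ed d) : Ed d →ₗ[ℝ] Ed d)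
      hdet).injective
    have : ξ₀ = 0 := by
      apply hinj
      simpa using h0
    rw [this] at hξ₀
    simp at hξ₀
  refine ⟨c, hcpos, fun x ξ => ?_⟩
  have hper : fderiv ℝ G x = fderiv ℝ G (fracMap x) := by
    conv_lhs => rw [fracMap_add_int x]
    exact lift_fderiv_periodic hG _ _
  rw [hper]
  rcases eq_or_ne ξ 0 with rfl | hξ
  · simp
  · have hu : (‖ξ‖⁻¹ • ξ) ∈ Metric.sphere (0 : Ed d) 1 := by
      have : ‖‖ξ‖⁻¹ • ξ‖ = 1 := by
        rw [norm_smul, norm_inv, norm_norm, inv_mul_cancel₀ (norm_ne_zero_iff.2 hξ)]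
      simpa [Metric.mem_sphere, dist_zero_right] using this
    have hmem : (fracMap x, ‖ξ‖⁻¹ • ξ) ∈ cube d ×ˢ Metric.sphere (0 : Ed d) 1 :=
      ⟨fracMap_mem_cube x, hu⟩
    have := isMinOn_iff.mp hminz _ hmem
    simp only [_root_.map_smul, norm_smul, norm_inv, norm_norm] at this
    have hξpos : 0 < ‖ξ‖ := norm_pos_iff.2 hξ
    calc c * ‖ξ‖ ≤ (‖ξ‖⁻¹ * ‖ContinuousLinearMap.adjoint (fderiv ℝ G (fracMap x)) ξ‖) * ‖ξ‖ := by
          apply mul_le_mul_of_nonneg_right _ hξpos.le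
          exact this
      _ = ‖ContinuousLinearMap.adjoint (fderiv ℝ G (fracMap x)) ξ‖ := by
          field_simp

lemma exists_min_vec (hd : 1 ≤ d) (T : Ed d →L[ℝ] Ed d) (hT : T.det ≠ 0) :
    ∃ ξ : Ed d, ξ ≠ 0 ∧
      ‖ContinuousLinearMap.adjoint T ξ‖ ^ d ≤ |T.det| * ‖ξ‖ ^ d := by
  haveI : Nonempty (Fin d) := ⟨⟨0, hd⟩⟩
  haveI : Nontrivial (Ed d) := inferInstance
  set N := ContinuousLinearMap.adjoint T with hN
  have hdetN : N.det ≠ 0 := by rw [hN, det_adjoint]; exact hT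
  obtain ⟨ξ₀, hξ₀s, hmin⟩ := (isCompact_sphere (0 : Ed d) 1).exists_isMinOn
    (NormedSpace.sphere_nonempty.mpr zero_le_one)
    (N.continuous.norm.continuousOn)
  have hξ₀ : ‖ξ₀‖ = 1 := by simpa [Metric.mem_sphere, dist_zero_right] using hξ₀s
  set c := ‖N ξ₀‖ with hc
  have hξ₀ne : ξ₀ ≠ 0 := by
    intro h; rw [h] at hξ₀; simp at hξ₀
  have hcpos : 0 < c := by
    rw [hc, norm_pos_iff]
    intro h0
    exact hξ₀ne ((LinearMap.equivOfDetNeZero (N : Ed d →ₗ[ℝ] Ed d) hdetN).injective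
      (by simpa using h0))
  have hlow : ∀ ξ : Ed d, c * ‖ξ‖ ≤ ‖N ξ‖ := by
    intro ξ
    rcases eq_or_ne ξ 0 with rfl | hξ
    · simp
    · have hξpos : 0 < ‖ξ‖ := norm_pos_iff.2 hξ
      have hu : (‖ξ‖⁻¹ • ξ) ∈ Metric.sphere (0 : Ed d) 1 := by
        have : ‖‖ξ‖⁻¹ • ξ‖ = 1 := by
          rw [norm_smul, norm_inv, norm_norm, inv_mul_cancel₀ hξpos.ne']
        simpa [Metric.mem_sphere, dist_zero_right] using this
      have := isMinOn_iff.mp hmin _ hu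
      simp only [_root_.map_smul, norm_smul, norm_inv, norm_norm] at this
      calc c * ‖ξ‖ ≤ (‖ξ‖⁻¹ * ‖N ξ‖) * ‖ξ‖ := mul_le_mul_of_nonneg_right this hξpos.le
        _ = ‖N ξ‖ := by field_simp
  -- measure argument : c ^ d ≤ |N.det|
  let e : Ed d ≃ₗ[ℝ] Ed d := LinearMap.equivOfDetNeZero (N : Ed d →ₗ[ℝ] Ed d) hdetN
  have hball : Metric.ball (0 : Ed d) c ⊆ (N : Ed d →ₗ[ℝ] Ed d) '' Metric.ball 0 1 := by
    intro y hy
    rw [Metric.mem_ball, dist_zero_right] at hy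
    refine ⟨e.symm y, ?_, ?_⟩
    · rw [Metric.mem_ball, dist_zero_right]
      have hNy : N (e.symm y) = y := e.apply_symm_apply y
      have := hlow (e.symm y)
      rw [hNy] at this
      nlinarith [norm_nonneg (e.symm y)]
    · exact e.apply_symm_apply y
  have himg := Measure.addHaar_image_linearMap (volume : Measure (Ed d))
    (N : Ed d →ₗ[ℝ] Ed d) (Metric.ball 0 1)
  have hballs : volume (Metric.ball (0 : Ed d) c)
      = ENNReal.ofReal (c ^ d) * volume (Metric.ball (0 : Ed d) 1) := by
    rw [Measure.addHaar_ball volume 0 hcpos.le, finrank_euclideanSpace_fin]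
  have hle : volume (Metric.ball (0 : Ed d) c) ≤ volume ((N : Ed d →ₗ[ℝ] Ed d) '' Metric.ball (0 : Ed d) 1) := measure_mono hball
  rw [himg, hballs] at hle
  have hV0 : volume (Metric.ball (0 : Ed d) 1) ≠ 0 := (Metric.measure_ball_pos volume 0 one_pos).ne'
  have hVt : volume (Metric.ball (0 : Ed d) 1) ≠ ⊤ := measure_ball_lt_top.ne
  rw [ENNReal.mul_le_mul_iff_left hV0 hVt] at hle
  rw [ENNReal.ofReal_le_ofReal_iff (abs_nonneg _)] at hle
  refine ⟨ξ₀, hξ₀ne, ?_⟩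
  rw [hξ₀, one_pow, mul_one]
  calc ‖N ξ₀‖ ^ d = c ^ d := by rw [hc]
    _ ≤ |LinearMap.det (N : Ed d →ₗ[ℝ] Ed d)| := hle
    _ = |T.det| := by
        show |N.det| = _
        rw [hN, det_adjoint]

lemma lift_exists_injOn (hG : IsLift d B G) (x : Ed d) :
    ∃ U : Set (Ed d), IsOpen U ∧ x ∈ U ∧ Set.InjOn G U := by
  have hdet := hG.2.2.2 x
  set E' := (fderiv ℝ G x).toContinuousLinearEquivOfDetNeZero hdet with hE'
  have hE : (E' : Ed d →L[ℝ] Ed d) = fderiv ℝ G x :=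
    ContinuousLinearMap.coe_toContinuousLinearEquivOfDetNeZero _ _
  have hs : HasStrictFDerivAt G (E' : Ed d →L[ℝ] Ed d) x := by
    rw [hE]
    exact (hG.1.contDiffAt).hasStrictFDerivAt (by simp)
  refine ⟨(hs.toOpenPartialHomeomorph G).source, (hs.toOpenPartialHomeomorph G).open_source,
    hs.mem_toOpenPartialHomeomorph_source, ?_⟩
  have h := (hs.toOpenPartialHomeomorph G).injOn
  rwa [hs.toOpenPartialHomeomorph_coe] at h

end Stmt8Aux

namespace Stmt8Aux

variable {d : ℕ} {B : Matrix (Fin d) (Fin d) ℤ} {G : Ed d → Ed d}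

lemma intVec_injective : Function.Injective (intVec d) := by
  intro k l h
  funext i
  have h2 : ((k i : ℝ)) = l i := congrArg (fun v : Ed d => v i) h
  exact_mod_cast h2

/-- The set of fiber representatives in `[0,1)^d`. -/
def fib (G : Ed d → Ed d) (q : Ed d) : Set (Ed d) :=
  {x | (∀ i, x i ∈ Set.Ico (0 : ℝ) 1) ∧ ∃ k, G x = q + intVec d k}

lemma fracMap_mem_fib (hG : IsLift d B G) {q p : Ed d} (hp : ∃ k, G p = q + intVec d k) :
    fracMap p ∈ fib G q := by
  refine ⟨fracMap_mem p, ?_⟩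
  obtain ⟨k, hk⟩ := hp
  refine ⟨k + B.mulVec fun i => -⌊p i⌋, ?_⟩
  have h1 : G (p + intVec d fun i => -⌊p i⌋)
      = G p + intVec d (B.mulVec fun i => -⌊p i⌋) := hG.2.2.1 p _
  show G (p + intVec d fun i => -⌊p i⌋) = _
  rw [h1, hk, intVec_add]
  abel

lemma fib_shift (G : Ed d → Ed d) (q : Ed d) (j : Fin d → ℤ) :
    fib G (q + intVec d j) = fib G q := by
  ext x
  simp only [fib, Set.mem_setOf_eq, and_congr_right_iff]
  intro _
  constructor
  · rintro ⟨k, hk⟩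
    refine ⟨j + k, ?_⟩
    rw [hk, intVec_add]
    abel
  · rintro ⟨k, hk⟩
    refine ⟨k - j, ?_⟩
    rw [hk, intVec_sub]
    abel

lemma lift_fib_bound (hG : IsLift d B G) :
    ∃ M : ℕ, ∀ q, (fib G q).Finite ∧ (fib G q).ncard ≤ M := by
  classical
  choose U hUo hUm hUi using lift_exists_injOn hG
  obtain ⟨t, ht⟩ := isCompact_cube.elim_finite_subcover U hUo
    (fun x _ => Set.mem_iUnion.2 ⟨x, hUm x⟩)
  obtain ⟨w, hw, hmax⟩ := isCompact_cube.exists_isMaxOn cube_nonempty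
    (hG.1.continuous.norm.continuousOn)
  set R : ℝ := ‖G w‖ + Real.sqrt d with hR
  set K₀ : Finset (Fin d → ℤ) := Finset.Icc (fun _ => -⌈R⌉) (fun _ => ⌈R⌉) with hK₀
  refine ⟨t.card * K₀.card, ?_⟩
  have main : ∀ q : Ed d, (∀ i, q i ∈ Set.Ico (0 : ℝ) 1) →
      (fib G q).Finite ∧ (fib G q).ncard ≤ t.card * K₀.card := by
    intro q hq
    have hinj : ∀ x ∈ fib G q, ∃ i k, i ∈ t ∧ k ∈ K₀ ∧ x ∈ U i ∧ G x = q + intVec d k := by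
      intro x hx
      obtain ⟨hx1, k, hk⟩ := hx
      have hxc : x ∈ cube d := fun i => ⟨(hx1 i).1, (hx1 i).2.le⟩
      obtain ⟨i, hit, hxi⟩ : ∃ i, i ∈ t ∧ x ∈ U i := by
        have := ht hxc
        simpa using this
      refine ⟨i, k, hit, ?_, hxi, hk⟩
      have hkn : ‖intVec d k‖ ≤ R := by
        have he : intVec d k = G x - q := by rw [hk]; abel
        rw [he, hR]
        have h1 : ‖G x‖ ≤ ‖G w‖ := isMaxOn_iff.mp hmax x hxc
        have h2 : ‖q‖ ≤ Real.sqrt d :=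
          norm_le_sqrt_d fun i => abs_le.2 ⟨by linarith [(hq i).1], (hq i).2.le⟩
        calc ‖G x - q‖ ≤ ‖G x‖ + ‖q‖ := norm_sub_le _ _
          _ ≤ ‖G w‖ + Real.sqrt d := add_le_add h1 h2
      have hcoord : ∀ i, |(k i : ℝ)| ≤ R := by
        intro i
        have := abs_coord_le_norm (intVec d k) i
        rw [intVec_apply] at this
        linarith
      rw [hK₀, Finset.mem_Icc]
      constructor
      · intro i
        have h1 := (abs_le.1 (hcoord i)).1
        have h2 : ((-⌈R⌉ : ℤ) : ℝ) ≤ (k i : ℝ) := by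
          push_cast
          linarith [Int.le_ceil R]
        exact_mod_cast h2
      · intro i
        have h1 := (abs_le.1 (hcoord i)).2
        have h2 : ((k i : ℝ)) ≤ ((⌈R⌉ : ℤ) : ℝ) := by
          push_cast
          linarith [Int.le_ceil R]
        exact_mod_cast h2
    choose ι κ hι hκ hUmem hGk using hinj
    let f : fib G q → {i // i ∈ t} × {k // k ∈ K₀} := fun x =>
      (⟨ι x x.2, hι x x.2⟩, ⟨κ x x.2, hκ x x.2⟩)
    have hf : Function.Injective f := by
      rintro ⟨a, ha⟩ ⟨b, hb⟩ hab
      simp only [f, Prod.mk.injEq, Subtype.mk.injEq] at hab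
      have hGab : G a = G b := by
        rw [hGk a ha, hGk b hb, hab.2]
      have hUa := hUmem a ha
      have hUb := hUmem b hb
      rw [hab.1] at hUa
      exact Subtype.ext (hUi (ι b hb) hUa hUb hGab)
    have hfin : Finite (fib G q) := Finite.of_injective f hf
    refine ⟨Set.finite_coe_iff.mp hfin, ?_⟩
    have hcard : Nat.card (fib G q) ≤ Nat.card ({i // i ∈ t} × {k // k ∈ K₀}) :=
      Nat.card_le_card_of_injective f hf
    rw [Nat.card_prod, Nat.card_eq_finsetCard, Nat.card_eq_finsetCard] at hcard
    rwa [← Nat.card_coe_set_eq]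
  intro q
  have hsplit : fib G q = fib G (fracMap q) := by
    conv_lhs => rw [fracMap_add_int q]
    exact fib_shift G (fracMap q) _
  rw [hsplit]
  exact main (fracMap q) (fracMap_mem q)

lemma lift_fib_isFiberRep (hG : IsLift d B G) (q : Ed d) (hfin : (fib G q).Finite) :
    IsFiberRep d G q hfin.toFinset := by
  refine ⟨?_, ?_, ?_⟩
  · intro p hp
    exact ((hfin.mem_toFinset).1 hp).2
  · rintro p hp p' hp' ⟨k, hk⟩
    have h1 := ((hfin.mem_toFinset).1 hp).1
    have h2 := ((hfin.mem_toFinset).1 hp').1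
    have hk0 : k = 0 := by
      funext i
      have hco : (k i : ℝ) = p' i - p i := by
        rw [hk, PiLp.add_apply, intVec_apply]; ring
      have ha1 := (h1 i).1; have ha2 := (h1 i).2
      have hb1 := (h2 i).1; have hb2 := (h2 i).2
      have hlt : -1 < (k i : ℝ) ∧ (k i : ℝ) < 1 := by
        rw [hco]; constructor <;> linarith
      have h4 : -1 < k i := by exact_mod_cast hlt.1
      have h5 : k i < 1 := by exact_mod_cast hlt.2
      simp only [Pi.zero_apply]
      omega
    rw [hk, hk0, intVec_zero, add_zero]
  · rintro p ⟨k, hk⟩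
    exact ⟨fracMap p, hfin.mem_toFinset.2 (fracMap_mem_fib hG ⟨k, hk⟩),
      fun i => ⌊p i⌋, fracMap_add_int p⟩

end Stmt8Aux

namespace Stmt8Aux

variable {d : ℕ} {B : Matrix (Fin d) (Fin d) ℤ} {G : Ed d → Ed d}

lemma key_det_bound (hd : 1 ≤ d) {μ : ℝ} (hμ : 0 < μ) (hG : IsLift d B G)
    (hB : Bmu d (2 * μ) G < 1) :
    ∃ β : ℝ, 1 < β ∧ ∀ x, β ≤ |(fderiv ℝ G x).det| := by
  classical
  have hd0 : (0 : ℝ) < d := by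
    have : 0 < d := hd
    exact_mod_cast this
  obtain ⟨M, hM⟩ := lift_fib_bound hG
  obtain ⟨c, hc, hcl⟩ := lift_adjoint_lower hd hG
  obtain ⟨γ, D, hγ, hbounds⟩ := lift_det_bounds hG
  set S : Set ℝ := {b | ∃ q ξ P, ξ ≠ 0 ∧ IsFiberRep d G q P ∧ b = bmu d (2 * μ) G ξ P} with hS
  have hSsup : Bmu d (2 * μ) G = sSup S := rfl
  -- S is bounded above
  have hSb : BddAbove S := by
    refine ⟨(M : ℝ) * (c⁻¹ ^ (2 * μ) / γ), ?_⟩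
    rintro b ⟨q, ξ, P, hξ, hrep, rfl⟩
    have hξpos : 0 < ‖ξ‖ := norm_pos_iff.2 hξ
    have hterm : ∀ p ∈ P,
        (‖ξ‖ / ‖ContinuousLinearMap.adjoint (fderiv ℝ G p) ξ‖) ^ (2 * μ)
            / |(fderiv ℝ G p).det|
          ≤ c⁻¹ ^ (2 * μ) / γ := by
      intro p _
      have h1 := hcl p ξ
      have hadj : 0 < ‖ContinuousLinearMap.adjoint (fderiv ℝ G p) ξ‖ :=
        lt_of_lt_of_le (by positivity) h1
      have h2 : ‖ξ‖ / ‖ContinuousLinearMap.adjoint (fderiv ℝ G p) ξ‖ ≤ c⁻¹ := by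
        rw [div_le_iff₀ hadj]
        have h3 := mul_le_mul_of_nonneg_left h1 (inv_nonneg.2 hc.le)
        rw [← mul_assoc, inv_mul_cancel₀ hc.ne', one_mul] at h3
        linarith
      have h3 : (‖ξ‖ / ‖ContinuousLinearMap.adjoint (fderiv ℝ G p) ξ‖) ^ (2 * μ)
          ≤ c⁻¹ ^ (2 * μ) :=
        Real.rpow_le_rpow (by positivity) h2 (by positivity)
      exact div_le_div₀ (by positivity) h3 hγ (hbounds p).1
    have hsum := Finset.sum_le_card_nsmul P _ _ hterm
    rw [nsmul_eq_mul] at hsum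
    have hcardM : P.card ≤ M := by
      have hmaps : ∀ p ∈ (P : Set (Ed d)), fracMap p ∈ fib G q := fun p hp =>
        fracMap_mem_fib hG (hrep.1 p hp)
      have hinj : Set.InjOn fracMap (P : Set (Ed d)) := by
        intro a ha b hb hab
        unfold fracMap at hab
        have hba : b = a + intVec d ((fun i => -⌊a i⌋) - fun i => -⌊b i⌋) := by
          rw [intVec_sub]
          calc b = (b + intVec d fun i => -⌊b i⌋) - intVec d (fun i => -⌊b i⌋) := by abel
            _ = (a + intVec d fun i => -⌊a i⌋) - intVec d (fun i => -⌊b i⌋) := by rw [← hab]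
            _ = a + ((intVec d fun i => -⌊a i⌋) - intVec d fun i => -⌊b i⌋) := by abel
        exact (hrep.2.1 a ha b hb ⟨_, hba⟩).symm
      have himg : fracMap '' (P : Set (Ed d)) ⊆ fib G q := by
        rintro _ ⟨p, hp, rfl⟩
        exact hmaps p hp
      have hn1 : (P : Set (Ed d)).ncard = P.card := Set.ncard_coe_finset P
      have hn2 : (fracMap '' (P : Set (Ed d))).ncard = (P : Set (Ed d)).ncard :=
        Set.ncard_image_of_injOn hinj
      have hn3 : (fracMap '' (P : Set (Ed d))).ncard ≤ (fib G q).ncard :=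
        Set.ncard_le_ncard himg (hM q).1
      have hn4 := (hM q).2
      omega
    have hbmu : bmu d (2 * μ) G ξ P
        ≤ (P.card : ℝ) * (c⁻¹ ^ (2 * μ) / γ) := hsum
    calc bmu d (2 * μ) G ξ P ≤ (P.card : ℝ) * (c⁻¹ ^ (2 * μ) / γ) := hbmu
      _ ≤ (M : ℝ) * (c⁻¹ ^ (2 * μ) / γ) := by
          have : (P.card : ℝ) ≤ (M : ℝ) := by exact_mod_cast hcardM
          exact mul_le_mul_of_nonneg_right this (by positivity)
  -- the exponent
  have h2μ : 0 < (d : ℝ)⁻¹ * (2 * μ) := mul_pos (inv_pos.2 hd0) (by linarith)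
  set e : ℝ := -((d : ℝ)⁻¹ * (2 * μ)) - 1 with hee
  have he : e < 0 := by rw [hee]; linarith
  -- main pointwise estimate
  have hmain : ∀ x : Ed d, |(fderiv ℝ G x).det| ^ e ≤ Bmu d (2 * μ) G := by
    intro x
    have hTx : fderiv ℝ G x = fderiv ℝ G (fracMap x) := by
      conv_lhs => rw [fracMap_add_int x]
      exact lift_fderiv_periodic hG _ _
    rw [hTx]
    set p := fracMap x with hp
    have hdet : (fderiv ℝ G p).det ≠ 0 := hG.2.2.2 p
    have ht : 0 < |(fderiv ℝ G p).det| := abs_pos.2 hdet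
    obtain ⟨ξ, hξ, hmv⟩ := exists_min_vec hd (fderiv ℝ G p) hdet
    have hξpos : 0 < ‖ξ‖ := norm_pos_iff.2 hξ
    have hpmem : p ∈ fib G (G p) := ⟨fracMap_mem x, 0, by rw [intVec_zero, add_zero]⟩
    have hfin := (hM (G p)).1
    have hrep := lift_fib_isFiberRep hG (G p) hfin
    have hadjpos : 0 < ‖ContinuousLinearMap.adjoint (fderiv ℝ G p) ξ‖ :=
      lt_of_lt_of_le (by positivity) (hcl p ξ)
    have hdne : d ≠ 0 := by omega
    -- step 1
    have h1 : ‖ContinuousLinearMap.adjoint (fderiv ℝ G p) ξ‖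
        ≤ |(fderiv ℝ G p).det| ^ ((d : ℝ)⁻¹) * ‖ξ‖ := by
      have hrhs : (|(fderiv ℝ G p).det| ^ ((d : ℝ)⁻¹) * ‖ξ‖) ^ d
          = |(fderiv ℝ G p).det| * ‖ξ‖ ^ d := by
        rw [mul_pow, Real.rpow_inv_natCast_pow ht.le hdne]
      refine le_of_pow_le_pow_left₀ hdne (by positivity) ?_
      rw [hrhs]
      exact hmv
    -- step 2
    have h2 : |(fderiv ℝ G p).det| ^ (-((d : ℝ)⁻¹))
        ≤ ‖ξ‖ / ‖ContinuousLinearMap.adjoint (fderiv ℝ G p) ξ‖ := by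
      have hda : ‖ξ‖ / (|(fderiv ℝ G p).det| ^ ((d : ℝ)⁻¹) * ‖ξ‖)
          ≤ ‖ξ‖ / ‖ContinuousLinearMap.adjoint (fderiv ℝ G p) ξ‖ :=
        div_le_div_of_nonneg_left hξpos.le hadjpos h1
      calc |(fderiv ℝ G p).det| ^ (-((d : ℝ)⁻¹))
          = ‖ξ‖ / (|(fderiv ℝ G p).det| ^ ((d : ℝ)⁻¹) * ‖ξ‖) := by
            rw [Real.rpow_neg ht.le]
            field_simp
        _ ≤ _ := hda
    -- step 3
    have h3 : (|(fderiv ℝ G p).det| ^ (-((d : ℝ)⁻¹))) ^ (2 * μ)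
        ≤ (‖ξ‖ / ‖ContinuousLinearMap.adjoint (fderiv ℝ G p) ξ‖) ^ (2 * μ) :=
      Real.rpow_le_rpow (Real.rpow_nonneg ht.le _) h2 (by positivity)
    have h4 : |(fderiv ℝ G p).det| ^ e
        ≤ (‖ξ‖ / ‖ContinuousLinearMap.adjoint (fderiv ℝ G p) ξ‖) ^ (2 * μ)
            / |(fderiv ℝ G p).det| := by
      have hsplit : |(fderiv ℝ G p).det| ^ e
          = (|(fderiv ℝ G p).det| ^ (-((d : ℝ)⁻¹))) ^ (2 * μ) / |(fderiv ℝ G p).det| := by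
        rw [hee, Real.rpow_sub ht, Real.rpow_one, ← Real.rpow_mul ht.le]
        ring_nf
      rw [hsplit]
      gcongr
    -- single term ≤ bmu ≤ Bmu
    have hmem : p ∈ hfin.toFinset := hfin.mem_toFinset.2 hpmem
    have hterm : (‖ξ‖ / ‖ContinuousLinearMap.adjoint (fderiv ℝ G p) ξ‖) ^ (2 * μ)
            / |(fderiv ℝ G p).det|
        ≤ bmu d (2 * μ) G ξ hfin.toFinset := by
      have := Finset.single_le_sum
        (f := fun y => (‖ξ‖ / ‖ContinuousLinearMap.adjoint (fderiv ℝ G y) ξ‖) ^ (2 * μ)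
          / |(fderiv ℝ G y).det|) (fun i _ => by positivity) hmem
      simpa [bmu] using this
    have hin : bmu d (2 * μ) G ξ hfin.toFinset ∈ S := ⟨G p, ξ, hfin.toFinset, hξ, hrep, rfl⟩
    have hble : bmu d (2 * μ) G ξ hfin.toFinset ≤ Bmu d (2 * μ) G := by
      rw [hSsup]
      exact le_csSup hSb hin
    calc |(fderiv ℝ G p).det| ^ e
        ≤ (‖ξ‖ / ‖ContinuousLinearMap.adjoint (fderiv ℝ G p) ξ‖) ^ (2 * μ)
            / |(fderiv ℝ G p).det| := h4
      _ ≤ bmu d (2 * μ) G ξ hfin.toFinset := hterm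
      _ ≤ Bmu d (2 * μ) G := hble
  -- conclude
  have hBvpos : 0 < Bmu d (2 * μ) G :=
    lt_of_lt_of_le (Real.rpow_pos_of_pos (abs_pos.2 (hG.2.2.2 0)) e) (hmain 0)
  refine ⟨Bmu d (2 * μ) G ^ e⁻¹, ?_, ?_⟩
  · rw [Real.one_lt_rpow_iff_of_pos hBvpos]
    right
    exact ⟨hB, inv_lt_zero.2 he⟩
  · intro x
    have h1 := hmain x
    have ht : 0 < |(fderiv ℝ G x).det| := abs_pos.2 (hG.2.2.2 x)
    have h2 := Real.rpow_le_rpow_of_nonpos (Real.rpow_pos_of_pos ht e) h1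
      (le_of_lt (inv_lt_zero.2 he))
    rw [← Real.rpow_mul ht.le, mul_inv_cancel₀ (ne_of_lt he), Real.rpow_one] at h2
    exact h2

end Stmt8Aux

namespace Stmt8Aux

variable {d : ℕ} {A : Matrix (Fin d) (Fin d) ℤ} {F : Ed d → Ed d}

lemma det_iterate_add (hF : IsLift d A F) (a b : ℕ) (x : Ed d) :
    |(fderiv ℝ (F^[a + b]) x).det|
      = |(fderiv ℝ (F^[a]) (F^[b] x)).det| * |(fderiv ℝ (F^[b]) x).det| := by
  rw [Function.iterate_add F a b,
    det_fderiv_comp ((lift_iterate hF a).1.differentiable (by simp))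
      ((lift_iterate hF b).1.differentiable (by simp)), abs_mul]

lemma det_iterate_lower (hF : IsLift d A F) {γ : ℝ} (hγ0 : 0 < γ)
    (hγ : ∀ x, γ ≤ |(fderiv ℝ F x).det|) :
    ∀ n x, γ ^ n ≤ |(fderiv ℝ (F^[n]) x).det|
  | 0, x => by
    rw [Function.iterate_zero, fderiv_id]
    simp [ContinuousLinearMap.det]
  | (n + 1), x => by
    rw [det_iterate_add hF n 1 x]
    have h1 := det_iterate_lower hF hγ0 hγ n (F^[1] x)
    have h2 : γ ≤ |(fderiv ℝ (F^[1]) x).det| := by simpa using hγ x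
    calc γ ^ (n + 1) = γ ^ n * γ := by ring
      _ ≤ _ := mul_le_mul h1 h2 hγ0.le (abs_nonneg _)

lemma det_iterate_upper (hF : IsLift d A F) {D : ℝ} (hD1 : 1 ≤ D)
    (hD : ∀ x, |(fderiv ℝ F x).det| ≤ D) :
    ∀ n x, |(fderiv ℝ (F^[n]) x).det| ≤ D ^ n
  | 0, x => by
    rw [Function.iterate_zero, fderiv_id]
    simp [ContinuousLinearMap.det]
  | (n + 1), x => by
    rw [det_iterate_add hF n 1 x]
    have h1 := det_iterate_upper hF hD1 hD n (F^[1] x)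
    have h2 : |(fderiv ℝ (F^[1]) x).det| ≤ D := by simpa using hD x
    calc |(fderiv ℝ (F^[n]) (F^[1] x)).det| * |(fderiv ℝ (F^[1]) x).det|
        ≤ D ^ n * D := mul_le_mul h1 h2 (abs_nonneg _) (by positivity)
      _ = D ^ (n + 1) := by ring

lemma growth (hF : IsLift d A F) {m : ℕ} (hm : 0 < m) {β γ' : ℝ}
    (hβ : 1 < β) (hβm : ∀ x, β ≤ |(fderiv ℝ (F^[m]) x).det|)
    (hγ'0 : 0 < γ') (hγ'1 : γ' ≤ 1) (hγ' : ∀ x, γ' ≤ |(fderiv ℝ F x).det|) :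
    ∀ a r x, γ' ^ r * β ^ a ≤ |(fderiv ℝ (F^[m * a + r]) x).det|
  | 0, r, x => by
    simpa using det_iterate_lower hF hγ'0 hγ' r x
  | (a + 1), r, x => by
    have hsplit : m * (a + 1) + r = (m * a + r) + m := by ring
    rw [hsplit, det_iterate_add hF (m * a + r) m x]
    have h1 := growth hF hm hβ hβm hγ'0 hγ'1 hγ' a r (F^[m] x)
    have h2 := hβm x
    calc γ' ^ r * β ^ (a + 1) = (γ' ^ r * β ^ a) * β := by ring
      _ ≤ _ := mul_le_mul h1 h2 (by linarith) (abs_nonneg _)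

end Stmt8Aux

end Stmt8AuxSection

open Stmt8Aux

/-- A `μ`-virtually expanding smooth self-covering map of `𝕋^d` is
volume-expanding: `liminf_n (inf_p |det D_pF^n|)^{1/n} > 1`. -/
theorem stmt8 (d : ℕ) (hd : 1 ≤ d) (μ : ℝ) (hμ : 0 < μ)
    (A : Matrix (Fin d) (Fin d) ℤ) (F : Ed d → Ed d) (hF : IsLift d A F)
    (hVE : VirtExpanding d μ F) :
    1 < Filter.liminf
      (fun n : ℕ =>
        (⨅ p : Ed d, |(fderiv ℝ (F^[n + 1]) p).det|) ^ ((1 : ℝ) / (n + 1))) atTop := by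
  classical
  have hVE' : ⨅ n : ℕ, Bmu d (2 * μ) (F^[n + 1]) ^ ((1 : ℝ) / (n + 1)) < 1 := hVE
  obtain ⟨n₀, hn₀⟩ := exists_lt_of_ciInf_lt hVE'
  set m : ℕ := n₀ + 1 with hmdef
  have hm0 : 0 < m := Nat.succ_pos n₀
  have hBnn : 0 ≤ Bmu d (2 * μ) (F^[m]) := by
    rw [Bmu]
    apply Real.sSup_nonneg
    rintro b ⟨q, ξ, P, hξ, hrep, rfl⟩
    rw [bmu]
    apply Finset.sum_nonneg
    intro i _
    positivity
  have hBm : Bmu d (2 * μ) (F^[m]) < 1 := by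
    by_contra hcon
    push_neg at hcon
    have h1 : (1 : ℝ) ≤ Bmu d (2 * μ) (F^[m]) ^ ((1 : ℝ) / ((n₀ : ℝ) + 1)) :=
      Real.one_le_rpow hcon (by positivity)
    have : Bmu d (2 * μ) (F^[n₀ + 1]) ^ ((1 : ℝ) / ((n₀ : ℝ) + 1)) < 1 := hn₀
    rw [← hmdef] at this
    linarith
  obtain ⟨β, hβ1, hβm⟩ := key_det_bound hd hμ (lift_iterate hF m) hBm
  have hβpos : (0 : ℝ) < β := lt_trans one_pos hβ1
  obtain ⟨γ, D, hγ0, hbnds⟩ := lift_det_bounds hF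
  set γ' : ℝ := min γ 1 with hγ'def
  have hγ'0 : 0 < γ' := lt_min hγ0 one_pos
  have hγ'1 : γ' ≤ 1 := min_le_right _ _
  have hγ' : ∀ x, γ' ≤ |(fderiv ℝ F x).det| := fun x =>
    le_trans (min_le_left _ _) (hbnds x).1
  set D' : ℝ := max D 1 with hD'def
  have hD'1 : 1 ≤ D' := le_max_right _ _
  have hD' : ∀ x, |(fderiv ℝ F x).det| ≤ D' := fun x =>
    le_trans (hbnds x).2 (le_max_left _ _)
  set u : ℕ → ℝ := fun n =>
    (⨅ p : Ed d, |(fderiv ℝ (F^[n + 1]) p).det|) ^ ((1 : ℝ) / (n + 1)) with hu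
  have hbb : ∀ n : ℕ, BddBelow (Set.range fun p : Ed d => |(fderiv ℝ (F^[n]) p).det|) :=
    fun n => ⟨0, by rintro y ⟨p, rfl⟩; exact abs_nonneg _⟩
  have hinf_nn : ∀ n : ℕ, 0 ≤ ⨅ p : Ed d, |(fderiv ℝ (F^[n]) p).det| :=
    fun n => le_ciInf fun p => abs_nonneg _
  have hinf_le : ∀ n : ℕ, (⨅ p : Ed d, |(fderiv ℝ (F^[n]) p).det|) ≤ D' ^ n := fun n =>
    le_trans (ciInf_le (hbb n) 0) (det_iterate_upper hF hD'1 hD' n 0)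
  have hinf_ge : ∀ n : ℕ, γ' ^ m * β ^ (n / m) ≤ ⨅ p : Ed d, |(fderiv ℝ (F^[n]) p).det| := by
    intro n
    apply le_ciInf
    intro p
    have hdecomp : m * (n / m) + n % m = n := Nat.div_add_mod n m
    have h := growth hF hm0 hβ1 hβm hγ'0 hγ'1 hγ' (n / m) (n % m) p
    rw [hdecomp] at h
    refine le_trans ?_ h
    have hpow : γ' ^ m ≤ γ' ^ (n % m) :=
      pow_le_pow_of_le_one hγ'0.le hγ'1 (le_of_lt (Nat.mod_lt n hm0))
    exact mul_le_mul_of_nonneg_right hpow (by positivity)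
  set ρ : ℝ := β ^ ((1 : ℝ) / (2 * m)) with hρdef
  have hmR : (0 : ℝ) < (m : ℝ) := by exact_mod_cast hm0
  have hρ1 : 1 < ρ := by
    rw [hρdef, Real.one_lt_rpow_iff_of_pos hβpos]
    left
    exact ⟨hβ1, by positivity⟩
  have hρpos : (0 : ℝ) < ρ := lt_trans one_pos hρ1
  -- eventual lower bound
  have hev : ∀ᶠ n : ℕ in atTop, ρ ≤ u n := by
    have hCpos : (0 : ℝ) < γ' ^ m := by positivity
    have hlog : Tendsto (fun n : ℕ => β ^ (1 - ((n : ℝ) + 1) / (2 * m))) atTop (nhds 0) := by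
      have hre : (fun n : ℕ => β ^ (1 - ((n : ℝ) + 1) / (2 * m)))
          = fun n : ℕ => Real.exp ((1 - ((n : ℝ) + 1) / (2 * m)) * Real.log β) := by
        funext n
        rw [Real.rpow_def_of_pos hβpos, mul_comm]
      rw [hre]
      apply Real.tendsto_exp_atBot.comp
      apply Filter.Tendsto.atBot_mul_const (Real.log_pos hβ1)
      have h1 : Tendsto (fun n : ℕ => ((n : ℝ) + 1) / (2 * m) - 1) atTop atTop := by
        apply tendsto_atTop_add_const_right
        apply Filter.Tendsto.atTop_div_const (by positivity)
        exact tendsto_atTop_add_const_right _ 1 tendsto_natCast_atTop_atTop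
      have h2 := tendsto_neg_atTop_atBot.comp h1
      have he : (fun n : ℕ => 1 - ((n : ℝ) + 1) / (2 * m))
          = fun n : ℕ => -(((n : ℝ) + 1) / (2 * m) - 1) := by
        funext n; ring
      rw [he]
      exact h2
    have hevlt : ∀ᶠ n : ℕ in atTop, β ^ (1 - ((n : ℝ) + 1) / (2 * m)) < γ' ^ m :=
      hlog.eventually_lt_const hCpos
    filter_upwards [hevlt] with n hn
    have hcore : ρ ^ (n + 1) ≤ γ' ^ m * β ^ ((n + 1) / m) := by
      have hρN : ρ ^ (n + 1) = β ^ (((n : ℝ) + 1) / (2 * m)) := by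
        rw [hρdef, ← Real.rpow_natCast (β ^ ((1 : ℝ) / (2 * m))) (n + 1),
          ← Real.rpow_mul hβpos.le]
        congr 1
        push_cast
        ring
      have hsum : β ^ (((n : ℝ) + 1) / (2 * m))
          = β ^ (1 - ((n : ℝ) + 1) / (2 * m)) * β ^ (((n : ℝ) + 1) / m - 1) := by
        rw [← Real.rpow_add hβpos]
        congr 1
        ring
      have hstep1 : ((n : ℝ) + 1) / m - 1 ≤ (((n + 1) / m : ℕ) : ℝ) := by
        have hmod : m * ((n + 1) / m) + (n + 1) % m = n + 1 := Nat.div_add_mod (n + 1) m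
        have hmodR : (m : ℝ) * (((n + 1) / m : ℕ) : ℝ) + (((n + 1) % m : ℕ) : ℝ)
            = (n : ℝ) + 1 := by exact_mod_cast hmod
        have hrlt : (((n + 1) % m : ℕ) : ℝ) < (m : ℝ) := by
          exact_mod_cast Nat.mod_lt (n + 1) hm0
        rw [sub_le_iff_le_add, div_le_iff₀ hmR]
        nlinarith
      calc ρ ^ (n + 1) = β ^ (1 - ((n : ℝ) + 1) / (2 * m)) * β ^ (((n : ℝ) + 1) / m - 1) := by
            rw [hρN, hsum]
        _ ≤ γ' ^ m * β ^ (((n : ℝ) + 1) / m - 1) :=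
            mul_le_mul_of_nonneg_right hn.le (Real.rpow_nonneg hβpos.le _)
        _ ≤ γ' ^ m * β ^ ((((n + 1) / m : ℕ) : ℝ)) :=
            mul_le_mul_of_nonneg_left
              (Real.rpow_le_rpow_of_exponent_le hβ1.le hstep1) (by positivity)
        _ = γ' ^ m * β ^ ((n + 1) / m) := by rw [Real.rpow_natCast]
    have hfinal : ρ ^ (n + 1) ≤ ⨅ p : Ed d, |(fderiv ℝ (F^[n + 1]) p).det| :=
      le_trans hcore (hinf_ge (n + 1))
    have h1 : (ρ ^ (n + 1)) ^ ((1 : ℝ) / ((n : ℝ) + 1)) ≤ u n :=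
      Real.rpow_le_rpow (by positivity) hfinal (by positivity)
    rwa [← Real.rpow_natCast ρ (n + 1), ← Real.rpow_mul hρpos.le,
      (show (((n + 1 : ℕ)) : ℝ) * ((1 : ℝ) / ((n : ℝ) + 1)) = 1 by
        push_cast
        field_simp), Real.rpow_one] at h1
  -- coboundedness
  have hcob : IsCoboundedUnder (· ≥ ·) atTop u := by
    refine isCoboundedUnder_ge_of_le atTop (x := D') fun n => ?_
    calc u n ≤ (D' ^ (n + 1)) ^ ((1 : ℝ) / ((n : ℝ) + 1)) :=
          Real.rpow_le_rpow (hinf_nn (n + 1)) (hinf_le (n + 1)) (by positivity)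
      _ = D' := by
          rw [← Real.rpow_natCast D' (n + 1), ← Real.rpow_mul (by linarith : (0 : ℝ) ≤ D'),
            (show (((n + 1 : ℕ)) : ℝ) * ((1 : ℝ) / ((n : ℝ) + 1)) = 1 by
              push_cast
              field_simp), Real.rpow_one]
  exact lt_of_lt_of_le hρ1 (le_liminf_of_le hcob hev)
end
end

section
/- There exists a constant C > 0 such that for every integer m ≥ 1 and all real numbers x₀ and s, the number of integers k with 0 ≤ k < m and |s + 2π sin(2π(x₀+k)/m)| < 5π/m is at most C·√m. -/
/-!
Write `θₖ = 2π(x₀ + k)/m`. For two indices in the set, the values `sin θₖ` differ by at most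
`ε = 5/m`. If moreover `cos θₖ` and `cos θₖ'` have the same sign, then
`(cos θₖ - cos θₖ')² ≤ |cos² θₖ - cos² θₖ'| = |sin² θₖ - sin² θₖ'| ≤ 2ε`, so the chord
`|e^{iθₖ} - e^{iθₖ'}| = 2 |sin (π(k - k')/m)|` is `O(m^{-1/2})`. By Jordan's inequality `k - k'`
is then within `O(√m)` of `0` modulo `m`, and residues with pairwise circular distance at most
`t` number at most `2t + 2`. Splitting by the sign of `cos θₖ` gives the bound `10 √m`.
-/

open Real Finset

lemma card_le_of_forall_min_sub_le {m t : ℕ} {S : Finset ℕ} (hS : S ⊆ range m)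
    (h : ∀ k ∈ S, ∀ k' ∈ S, k' < k → min (k - k') (m - (k - k')) ≤ t) :
    #S ≤ 2 * t + 2 := by
  rcases S.eq_empty_or_nonempty with rfl | hne
  · simp
  set p := S.min' hne
  have hcover : S ⊆ Icc p (p + t) ∪ Ico (m - t) m := by
    intro k hk
    have hkm : k < m := mem_range.mp (hS hk)
    rcases (S.min'_le k hk).eq_or_lt with hpk | hpk
    · exact mem_union_left _ (mem_Icc.mpr ⟨hpk.le, by omega⟩)
    rcases min_le_iff.mp (h k hk p (S.min'_mem hne) hpk) with hnear | hfar
    · exact mem_union_left _ (mem_Icc.mpr ⟨hpk.le, by omega⟩)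
    · exact mem_union_right _ (mem_Ico.mpr ⟨by omega, hkm⟩)
  calc #S ≤ #(Icc p (p + t) ∪ Ico (m - t) m) := card_le_card hcover
    _ ≤ #(Icc p (p + t)) + #(Ico (m - t) m) := card_union_le _ _
    _ ≤ 2 * t + 2 := by rw [Nat.card_Icc, Nat.card_Ico]; omega

lemma two_mul_min_le_sin_pi_mul {x : ℝ} (hx₀ : 0 ≤ x) (hx₁ : x ≤ 1) :
    2 * min x (1 - x) ≤ sin (π * x) := by
  have jordan : ∀ y, 0 ≤ y → y ≤ 1 / 2 → 2 * y ≤ sin (π * y) := fun y hy₀ hy₁ => by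
    have := mul_le_sin (by positivity : 0 ≤ π * y) (by nlinarith [pi_pos])
    rwa [← mul_assoc, div_mul_cancel₀ _ pi_ne_zero] at this
  rcases le_total x (1 / 2) with hx | hx
  · exact (mul_le_mul_of_nonneg_left (min_le_left _ _) zero_le_two).trans (jordan x hx₀ hx)
  · rw [← sin_pi_sub, ← mul_one_sub]
    exact (mul_le_mul_of_nonneg_left (min_le_right _ _) zero_le_two).trans
      (jordan (1 - x) (by linarith) (by linarith))

lemma card_le_of_forall_sin_pi_sub_div_le {m : ℕ} {S : Finset ℕ} {η : ℝ} (hS : S ⊆ range m)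
    (hη : 0 ≤ η) (h : ∀ k ∈ S, ∀ k' ∈ S, k' < k → sin (π * ((k : ℝ) - k') / m) ≤ η) :
    (#S : ℝ) ≤ m * η + 2 := by
  set t := ⌊m * η / 2⌋₊
  suffices hcard : #S ≤ 2 * t + 2 by
    have hfloor := Nat.floor_le (by positivity : 0 ≤ m * η / 2)
    have : (#S : ℝ) ≤ 2 * t + 2 := by exact_mod_cast hcard
    linarith
  refine card_le_of_forall_min_sub_le hS fun k hk k' hk' hlt => Nat.le_floor ?_
  have hkm : k < m := mem_range.mp (hS hk)
  have hm : (0 : ℝ) < m := by exact_mod_cast (k.zero_le.trans_lt hkm)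
  set x := ((k : ℝ) - k') / m
  have hx : x = ((k - k' : ℕ) : ℝ) / m := by rw [Nat.cast_sub hlt.le]
  have hx₀ : 0 ≤ x := by rw [hx]; positivity
  have hx₁ : x ≤ 1 := by rw [hx, div_le_one hm]; exact_mod_cast (Nat.sub_le k k').trans hkm.le
  have hmin : ((min (k - k') (m - (k - k')) : ℕ) : ℝ) = m * min x (1 - x) := by
    rw [mul_min_of_nonneg _ _ hm.le, hx, Nat.cast_min, Nat.cast_sub (by omega : k - k' ≤ m)]
    field_simp
  have hsin : sin (π * x) ≤ η := by simpa only [x, mul_div_assoc] using h k hk k' hk' hlt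
  have := (two_mul_min_le_sin_pi_mul hx₀ hx₁).trans hsin
  rw [hmin]
  nlinarith

lemma sq_sub_le_abs_sq_sub_sq {a b : ℝ} (hab : 0 ≤ a * b) : (a - b) ^ 2 ≤ |a ^ 2 - b ^ 2| := by
  have : |a - b| ≤ |a + b| := sq_le_sq.mp (by nlinarith)
  calc (a - b) ^ 2 = |a - b| * |a - b| := by rw [← sq_abs, sq]
    _ ≤ |a - b| * |a + b| := by gcongr
    _ = |a ^ 2 - b ^ 2| := by rw [← abs_mul]; ring_nf

lemma four_mul_sin_sq_half_sub (θ θ' : ℝ) :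
    4 * sin ((θ - θ') / 2) ^ 2 = (sin θ - sin θ') ^ 2 + (cos θ - cos θ') ^ 2 := by
  rw [sin_sq_eq_half_sub, mul_div_cancel₀ _ two_ne_zero, cos_sub]
  nlinarith [sin_sq_add_cos_sq θ, sin_sq_add_cos_sq θ']

lemma four_mul_sin_sq_half_sub_le {θ θ' : ℝ} (hcos : 0 ≤ cos θ * cos θ') :
    4 * sin ((θ - θ') / 2) ^ 2 ≤ (sin θ - sin θ') ^ 2 + 2 * |sin θ - sin θ'| := by
  have hsum : |sin θ' + sin θ| ≤ 2 := (abs_add_le _ _).trans (by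
    linarith [abs_sin_le_one θ, abs_sin_le_one θ'])
  have : (cos θ - cos θ') ^ 2 ≤ 2 * |sin θ - sin θ'| :=
    calc (cos θ - cos θ') ^ 2 ≤ |cos θ ^ 2 - cos θ' ^ 2| := sq_sub_le_abs_sq_sub_sq hcos
      _ = |sin θ' + sin θ| * |sin θ - sin θ'| := by
        rw [← abs_mul, cos_sq', cos_sq', abs_sub_comm]; ring_nf
      _ ≤ 2 * |sin θ - sin θ'| := by gcongr
  rw [four_mul_sin_sq_half_sub]
  linarith

lemma card_le_of_abs_sin_sub_le {m : ℕ} {x₀ ε : ℝ} {S : Finset ℕ} (hS : S ⊆ range m)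
    (hε : 0 ≤ ε)
    (hsin : ∀ k ∈ S, ∀ k' ∈ S,
      |sin (2 * π * (x₀ + k) / m) - sin (2 * π * (x₀ + k') / m)| ≤ ε)
    (hcos : ∀ k ∈ S, ∀ k' ∈ S, 0 ≤ cos (2 * π * (x₀ + k) / m) * cos (2 * π * (x₀ + k') / m)) :
    (#S : ℝ) ≤ m * (√(ε * (ε + 2)) / 2) + 2 := by
  refine card_le_of_forall_sin_pi_sub_div_le hS (by positivity) fun k hk k' hk' _ => ?_
  have hm : (m : ℝ) ≠ 0 := by
    have : 0 < m := (Nat.zero_le k).trans_lt (mem_range.mp (hS hk))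
    positivity
  have hhalf : (2 * π * (x₀ + k) / m - 2 * π * (x₀ + k') / m) / 2 = π * ((k : ℝ) - k') / m := by
    field_simp; ring
  set d := sin (2 * π * (x₀ + k) / m) - sin (2 * π * (x₀ + k') / m)
  set y := π * ((k : ℝ) - k') / m
  have hd : |d| ≤ ε := hsin k hk k' hk'
  have hsq : (2 * sin y) ^ 2 ≤ ε * (ε + 2) :=
    calc (2 * sin y) ^ 2 = 4 * sin y ^ 2 := by ring
      _ ≤ d ^ 2 + 2 * |d| := hhalf ▸ four_mul_sin_sq_half_sub_le (hcos k hk k' hk')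
      _ = |d| * (|d| + 2) := by rw [← sq_abs]; ring
      _ ≤ ε * (ε + 2) := by gcongr
  linarith [le_abs_self (2 * sin y), Real.abs_le_sqrt hsq]

lemma abs_sub_le_of_abs_add_mul_lt {s c a b r : ℝ} (hc : 0 < c) (ha : |s + c * a| < r)
    (hb : |s + c * b| < r) : |a - b| ≤ 2 * r / c := by
  rw [le_div_iff₀ hc]
  calc |a - b| * c = |(s + c * a) - (s + c * b)| := by
        rw [show s + c * a - (s + c * b) = (a - b) * c by ring, abs_mul, abs_of_pos hc]
    _ ≤ |s + c * a| + |s + c * b| := abs_sub _ _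
    _ ≤ 2 * r := by linarith

/-- There is a constant `C > 0` such that for every `m ≥ 1` and all real
`x₀, s`, the number of integers `0 ≤ k < m` with `|s + 2π sin(2π(x₀+k)/m)| < 5π/m` is at
most `C √m`. -/
theorem stmt13 :
    ∃ C > 0, ∀ m : ℕ, 1 ≤ m → ∀ x₀ s : ℝ,
      (((Finset.range m).filter fun k : ℕ =>
          |s + 2 * π * Real.sin (2 * π * (x₀ + (k : ℝ)) / m)| < 5 * π / m).card : ℝ) ≤
        C * Real.sqrt m := by
  refine ⟨10, by norm_num, fun m hm x₀ s => ?_⟩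
  set θ : ℕ → ℝ := fun k => 2 * π * (x₀ + k) / m
  set B := (range m).filter fun k => |s + 2 * π * sin (θ k)| < 5 * π / m
  have hsin : ∀ k ∈ B, ∀ k' ∈ B, |sin (θ k) - sin (θ k')| ≤ 5 / m :=
    fun k hk k' hk' => (abs_sub_le_of_abs_add_mul_lt two_pi_pos (mem_filter.mp hk).2
      (mem_filter.mp hk').2).trans_eq (by field_simp)
  have hbound : (m : ℝ) * (√(5 / m * (5 / m + 2)) / 2) + 2 ≤ 5 * √m := by
    have hm' : (1 : ℝ) ≤ m := by exact_mod_cast hm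
    have hroot : (m : ℝ) * √(5 / m * (5 / m + 2)) ≤ 6 * √m :=
      calc (m : ℝ) * √(5 / m * (5 / m + 2)) = √(m ^ 2 * (5 / m * (5 / m + 2))) := by
            rw [Real.sqrt_mul (sq_nonneg _), Real.sqrt_sq (by positivity)]
        _ = √(25 + 10 * m) := by congr 1; field_simp; ring
        _ ≤ √(6 ^ 2 * m) := Real.sqrt_le_sqrt (by linarith)
        _ = 6 * √m := by rw [Real.sqrt_mul (by positivity), Real.sqrt_sq (by norm_num)]
    linarith [Real.one_le_sqrt.mpr hm']
  have hgroup : ∀ S ⊆ B, (∀ k ∈ S, ∀ k' ∈ S, 0 ≤ cos (θ k) * cos (θ k')) → (#S : ℝ) ≤ 5 * √m :=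
    fun S hSB hcos => (card_le_of_abs_sin_sub_le (hSB.trans (filter_subset _ _)) (by positivity)
      (fun k hk k' hk' => hsin k (hSB hk) k' (hSB hk')) hcos).trans hbound
  rw [← card_filter_add_card_filter_not (fun k => 0 ≤ cos (θ k))]
  push_cast
  linarith [hgroup _ (filter_subset _ _) fun k hk k' hk' =>
      mul_nonneg (mem_filter.mp hk).2 (mem_filter.mp hk').2,
    hgroup _ (filter_subset _ _) fun k hk k' hk' =>
      mul_nonneg_of_nonpos_of_nonpos (not_le.mp (mem_filter.mp hk).2).le
        (not_le.mp (mem_filter.mp hk').2).le]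
end
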